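/- arXiv:2503.14058 — 6 statements merged into one kernel-verified Lean document; each statement's English description precedes it below -/
import Mathlib

section
/- Let q ≥ 5 be an odd prime power, and let G_1 be the graph on vertex set {(x,y) : x,y ∈ F_q*} where (x1,y1) ∼ (x2,y2) iff any three of the five points e_1=(1,0,0), e_2=(0,1,0), e_3=(0,0,1), (1,x1,y1), (1,x2,y2) of PG(2,q) are non-collinear (with the two points distinct). Then G_1 is a strongly regular graph with parameters v=(q-1)^2, k=(q-2)(q-3), λ=(q-4)^2+1, μ=(q-3)(q-4). -/
/-!
The determinants of the triples are, up to sign, `1`, `x`, `y`, `x₁ - x₂`, `y₁ - y₂` and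
`x₁y₂ - x₂y₁`, so two vertices are adjacent iff they differ in `x`, in `y` and in `y / x`.
Hence `G₁` is the complement of the Latin square graph of the Cayley table of the group `F_q^*`
of order `n = q - 1`, and its parameters follow from counting common neighbours row by row.
-/

open Finset

theorem Finset.card_filter_fst_notMem_snd_notMem {α β : Type*} [Fintype α] [Fintype β]
    [DecidableEq α] [DecidableEq β] (A : Finset α) (B : α → Finset β) :
    #{z : α × β | z.1 ∉ A ∧ z.2 ∉ B z.1} = ∑ a ∈ Aᶜ, (Fintype.card β - #(B a)) := by
  rw [card_filter, Fintype.sum_prod_type, ← sum_add_sum_compl A,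
    sum_eq_zero fun a ha => by simp [ha], zero_add]
  refine sum_congr rfl fun a ha => ?_
  rw [← card_compl, ← card_filter]
  congr 1; ext; simp [mem_compl.mp ha]

theorem Finset.card_four_add_ite_add_ite {α : Type*} [DecidableEq α] {p q r t : α}
    (hpq : p ≠ q) (hpr : p ≠ r) (hqt : q ≠ t) (hrt : r ≠ t) :
    #{p, q, r, t} + (if p = t then 1 else 0) + (if q = r then 1 else 0) = 4 := by
  by_cases hpt : p = t <;> by_cases hqr : q = r
  · subst hpt hqr; simp [card_insert_of_notMem, *]
  · subst hpt; simp [card_insert_of_notMem, *]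
  · subst hqr; simp [card_insert_of_notMem, *]
  · simp [card_insert_of_notMem, *]

section Group

variable {Γ : Type*} [Group Γ]

theorem mul_inv_mul_eq_right_iff {a x y : Γ} : a * (x⁻¹ * y) = y ↔ a = x := by
  rw [← mul_assoc, mul_eq_right, mul_inv_eq_one]

theorem mul_inv_notMem_pair [DecidableEq Γ] {x₁ y₁ x₂ y₂ : Γ} (hy : y₁ ≠ y₂)
    (hs : x₁⁻¹ * y₁ ≠ x₂⁻¹ * y₂) : y₁ * (x₂⁻¹ * y₂)⁻¹ ∉ ({x₁, x₂} : Finset Γ) := by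
  simp only [mem_insert, mem_singleton, not_or, mul_inv_eq_iff_eq_mul]
  refine ⟨fun h => hs ?_, fun h => hy ?_⟩
  · rw [h, inv_mul_cancel_left]
  · rw [h, mul_inv_cancel_left]

end Group

namespace SimpleGraph

section Iso

variable {V W : Type*} [Fintype V] [Fintype W] {G : SimpleGraph V} {G' : SimpleGraph W}
  [DecidableRel G.Adj] [DecidableRel G'.Adj]

theorem Iso.card_commonNeighbors_eq (f : G ≃g G') (v w : V) :
    Fintype.card (G'.commonNeighbors (f v) (f w)) = Fintype.card (G.commonNeighbors v w) :=
  Fintype.card_congr (f.toEquiv.subtypeEquiv fun z => by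
    simp [mem_commonNeighbors, f.map_adj_iff]).symm

theorem IsSRGWith.of_iso {n k ℓ μ : ℕ} (f : G ≃g G') (h : G'.IsSRGWith n k ℓ μ) :
    G.IsSRGWith n k ℓ μ where
  card := f.card_eq.trans h.card
  regular v := f.degree_eq v ▸ h.regular (f v)
  of_adj v w hvw := f.card_commonNeighbors_eq v w ▸ h.of_adj _ _ (f.map_adj_iff.mpr hvw)
  of_not_adj v w hne hvw :=
    f.card_commonNeighbors_eq v w ▸ h.of_not_adj (f.injective.ne hne) (mt f.map_adj_iff.mp hvw)

end Iso

variable (Γ : Type*) [Group Γ]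

/-- The complement of the Latin square graph of the Cayley table of `Γ`: the cell `(x, y)` carries
the entry `x⁻¹ * y`, and two cells are adjacent iff they differ in row, column and entry. -/
@[simps]
def latinSquareCompl : SimpleGraph (Γ × Γ) where
  Adj u w := u.1 ≠ w.1 ∧ u.2 ≠ w.2 ∧ u.1⁻¹ * u.2 ≠ w.1⁻¹ * w.2
  symm := ⟨fun _ _ h => ⟨h.1.symm, h.2.1.symm, h.2.2.symm⟩⟩
  loopless := ⟨fun _ h => h.1 rfl⟩

instance [DecidableEq Γ] : DecidableRel (latinSquareCompl Γ).Adj :=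
  fun _ _ => inferInstanceAs (Decidable (_ ∧ _ ∧ _))

variable {Γ} [DecidableEq Γ]

theorem latinSquareCompl_adj_iff {u z : Γ × Γ} :
    (latinSquareCompl Γ).Adj u z ↔
      z.1 ∉ ({u.1} : Finset Γ) ∧ z.2 ∉ ({u.2, z.1 * (u.1⁻¹ * u.2)} : Finset Γ) := by
  simp [eq_inv_mul_iff_mul_eq, eq_comm]

theorem latinSquareCompl_adj_and_adj_iff {u w z : Γ × Γ} :
    (latinSquareCompl Γ).Adj u z ∧ (latinSquareCompl Γ).Adj w z ↔
      z.1 ∉ ({u.1, w.1} : Finset Γ) ∧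
        z.2 ∉ ({u.2, z.1 * (u.1⁻¹ * u.2), w.2, z.1 * (w.1⁻¹ * w.2)} : Finset Γ) := by
  simp only [latinSquareCompl_adj_iff, mem_insert, mem_singleton]
  tauto

variable [Fintype Γ]

theorem latinSquareCompl_degree (u : Γ × Γ) :
    (latinSquareCompl Γ).degree u = (Fintype.card Γ - 1) * (Fintype.card Γ - 2) := by
  have hfiber (a : Γ) (ha : a ∈ ({u.1} : Finset Γ)ᶜ) :
      Fintype.card Γ - #{u.2, a * (u.1⁻¹ * u.2)} = Fintype.card Γ - 2 := by
    rw [card_pair fun h => by simp_all [eq_comm (a := u.2), mul_inv_mul_eq_right_iff]]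
  have hnbr : (latinSquareCompl Γ).neighborFinset u =
      ({z | z.1 ∉ ({u.1} : Finset Γ) ∧ z.2 ∉ ({u.2, z.1 * (u.1⁻¹ * u.2)} : Finset Γ)} :
        Finset (Γ × Γ)) := by
    ext; simp only [mem_neighborFinset, latinSquareCompl_adj_iff, mem_filter, mem_univ, true_and]
  rw [← card_neighborFinset_eq_degree, hnbr,
    card_filter_fst_notMem_snd_notMem _ fun a => {u.2, a * (u.1⁻¹ * u.2)},
    sum_congr rfl hfiber, sum_const, card_compl, card_singleton, smul_eq_mul]

theorem card_commonNeighbors_latinSquareCompl (u w : Γ × Γ) :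
    Fintype.card ((latinSquareCompl Γ).commonNeighbors u w) =
      ∑ a ∈ ({u.1, w.1} : Finset Γ)ᶜ,
        (Fintype.card Γ - #{u.2, a * (u.1⁻¹ * u.2), w.2, a * (w.1⁻¹ * w.2)}) := by
  rw [← card_filter_fst_notMem_snd_notMem _
      fun a => {u.2, a * (u.1⁻¹ * u.2), w.2, a * (w.1⁻¹ * w.2)}, ← Set.toFinset_card]
  congr 1
  ext z
  simp only [Set.mem_toFinset, mem_commonNeighbors, latinSquareCompl_adj_and_adj_iff, mem_filter,
    mem_univ, true_and]

/-- Write `u = (x₁, y₁)`, `w = (x₂, y₂)` and `sᵢ = xᵢ⁻¹ yᵢ`. In each row `a ∉ {x₁, x₂}` the four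
excluded columns `y₁, a s₁, y₂, a s₂` are distinct except for `y₁ = a s₂` and `y₂ = a s₁`, each of
which happens in exactly one such row. -/
theorem card_commonNeighbors_latinSquareCompl_of_ne {u w : Γ × Γ} (hy : u.2 ≠ w.2)
    (hs : u.1⁻¹ * u.2 ≠ w.1⁻¹ * w.2) :
    Fintype.card ((latinSquareCompl Γ).commonNeighbors u w) + #({u.1, w.1}ᶜ : Finset Γ) * 4 =
      #({u.1, w.1}ᶜ : Finset Γ) * Fintype.card Γ + 2 := by
  have hfiber (a : Γ) (ha : a ∈ ({u.1, w.1} : Finset Γ)ᶜ) :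
      Fintype.card Γ - #{u.2, a * (u.1⁻¹ * u.2), w.2, a * (w.1⁻¹ * w.2)} + 4 =
        Fintype.card Γ + ((if a = u.2 * (w.1⁻¹ * w.2)⁻¹ then 1 else 0) +
          (if a = w.2 * (u.1⁻¹ * u.2)⁻¹ then 1 else 0)) := by
    simp only [mem_compl, mem_insert, mem_singleton, not_or] at ha
    have h4 := card_four_add_ite_add_ite (p := u.2) (q := a * (u.1⁻¹ * u.2)) (r := w.2)
      (t := a * (w.1⁻¹ * w.2)) (fun h => ha.1 (mul_inv_mul_eq_right_iff.mp h.symm)) hy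
      (fun h => hs (mul_left_cancel h)) (fun h => ha.2 (mul_inv_mul_eq_right_iff.mp h.symm))
    have hle := card_le_univ {u.2, a * (u.1⁻¹ * u.2), w.2, a * (w.1⁻¹ * w.2)}
    simp only [eq_mul_inv_iff_mul_eq, eq_comm (a := u.2), eq_comm (b := w.2)] at h4 ⊢
    omega
  have hmem₁ := mem_compl.mpr (mul_inv_notMem_pair hy hs)
  have hmem₂ : w.2 * (u.1⁻¹ * u.2)⁻¹ ∈ ({u.1, w.1} : Finset Γ)ᶜ := by
    rw [pair_comm]; exact mem_compl.mpr (mul_inv_notMem_pair hy.symm hs.symm)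
  have hsum := sum_congr rfl hfiber
  simp only [sum_add_distrib, sum_const, smul_eq_mul, sum_ite_eq', if_pos hmem₁,
    if_pos hmem₂] at hsum
  rw [card_commonNeighbors_latinSquareCompl]
  omega

theorem card_commonNeighbors_latinSquareCompl_of_eq {u w : Γ × Γ} (hx : u.1 ≠ w.1)
    (h : u.2 = w.2 ∨ u.1⁻¹ * u.2 = w.1⁻¹ * w.2) :
    Fintype.card ((latinSquareCompl Γ).commonNeighbors u w) =
      (Fintype.card Γ - 2) * (Fintype.card Γ - 3) := by
  have hfiber (a : Γ) (ha : a ∈ ({u.1, w.1} : Finset Γ)ᶜ) :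
      Fintype.card Γ - #{u.2, a * (u.1⁻¹ * u.2), w.2, a * (w.1⁻¹ * w.2)} =
        Fintype.card Γ - 3 := by
    simp only [mem_compl, mem_insert, mem_singleton, not_or] at ha
    have h₁ : u.2 ≠ a * (u.1⁻¹ * u.2) := fun h => ha.1 (mul_inv_mul_eq_right_iff.mp h.symm)
    have h₂ : w.2 ≠ a * (w.1⁻¹ * w.2) := fun h => ha.2 (mul_inv_mul_eq_right_iff.mp h.symm)
    rcases h with hy | hs
    · have hs : u.1⁻¹ * u.2 ≠ w.1⁻¹ * w.2 := by rwa [hy, Ne, mul_left_inj, inv_inj]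
      rw [hy] at h₁ hs ⊢
      simp [card_insert_of_notMem, h₁.symm, h₂, hs]
    · have hy : u.2 ≠ w.2 := fun hy => hx (by rwa [hy, mul_left_inj, inv_inj] at hs)
      rw [hs] at h₁ ⊢
      simp [h₁, h₂, hy]
  rw [card_commonNeighbors_latinSquareCompl, sum_congr rfl hfiber, sum_const, card_compl,
    card_pair hx, smul_eq_mul]

theorem isSRGWith_latinSquareCompl :
    (latinSquareCompl Γ).IsSRGWith (Fintype.card Γ ^ 2)
      ((Fintype.card Γ - 1) * (Fintype.card Γ - 2)) ((Fintype.card Γ - 3) ^ 2 + 1)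
      ((Fintype.card Γ - 2) * (Fintype.card Γ - 3)) where
  card := by rw [Fintype.card_prod, sq]
  regular := latinSquareCompl_degree
  of_adj u w h := by
    obtain ⟨hx, hy, hs⟩ := h
    have hc := card_commonNeighbors_latinSquareCompl_of_ne hy hs
    have hle := (latinSquareCompl Γ).card_commonNeighbors_le_degree_left u w
    rw [card_compl, card_pair hx] at hc
    rw [latinSquareCompl_degree] at hle
    generalize Fintype.card ((latinSquareCompl Γ).commonNeighbors u w) = c at hc hle ⊢
    generalize Fintype.card Γ = n at hc hle ⊢
    -- for `n ≤ 2` the hypotheses `hc` and `hle` are contradictory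
    rcases n with _ | _ | _ | n <;> simp at hc hle ⊢ <;> ring_nf at hc hle ⊢ <;> omega
  of_not_adj u w hne hnadj := by
    by_cases hx : u.1 = w.1
    · have hy : u.2 ≠ w.2 := fun hy => hne (Prod.ext hx hy)
      have hs : u.1⁻¹ * u.2 ≠ w.1⁻¹ * w.2 := by rwa [hx, Ne, mul_right_inj]
      have hc := card_commonNeighbors_latinSquareCompl_of_ne hy hs
      have hle := (latinSquareCompl Γ).card_commonNeighbors_le_degree_left u w
      rw [hx, pair_eq_singleton, card_compl, card_singleton] at hc
      rw [latinSquareCompl_degree] at hle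
      generalize Fintype.card ((latinSquareCompl Γ).commonNeighbors u w) = c at hc hle ⊢
      generalize Fintype.card Γ = n at hc hle ⊢
      rcases n with _ | _ | _ | n <;> simp at hc hle ⊢ <;> ring_nf at hc hle ⊢ <;> omega
    · refine card_commonNeighbors_latinSquareCompl_of_eq hx ?_
      by_contra! h
      exact hnadj ⟨hx, h⟩

theorem latinSquareCompl_units_adj_iff {F : Type*} [CommGroupWithZero F] {u w : Fˣ × Fˣ} :
    (latinSquareCompl Fˣ).Adj u w ↔
      (u.1 : F) ≠ w.1 ∧ (u.2 : F) ≠ w.2 ∧ (u.1 : F) * w.2 ≠ w.1 * u.2 := by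
  simp only [latinSquareCompl_adj, Ne, Units.ext_iff, inv_mul_eq_div, Units.val_div_eq_div_val,
    div_eq_div_iff u.1.ne_zero w.1.ne_zero]
  rw [mul_comm (u.2 : F), mul_comm (w.2 : F), eq_comm (a := (w.1 : F) * u.2)]

end SimpleGraph

section ProjectivePlane

variable {F : Type*} [CommRing F]

def fivePoints (x₁ y₁ x₂ y₂ : F) : Fin 5 → Fin 3 → F :=
  ![![1, 0, 0], ![0, 1, 0], ![0, 0, 1], ![1, x₁, y₁], ![1, x₂, y₂]]

def InGeneralPosition {m : ℕ} (P : Fin m → Fin 3 → F) : Prop :=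
  ∀ i j k, i ≠ j → i ≠ k → j ≠ k → (Matrix.of ![P i, P j, P k]).det ≠ 0

theorem inGeneralPosition_fivePoints_iff [Nontrivial F] (x₁ y₁ x₂ y₂ : F) :
    InGeneralPosition (fivePoints x₁ y₁ x₂ y₂) ↔
      (x₁ ≠ 0 ∧ y₁ ≠ 0 ∧ x₂ ≠ 0 ∧ y₂ ≠ 0) ∧ x₁ ≠ x₂ ∧ y₁ ≠ y₂ ∧ x₁ * y₂ ≠ x₂ * y₁ := by
  constructor
  · intro h
    have := h 0 1 3; have := h 0 1 4; have := h 0 2 3; have := h 0 2 4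
    have := h 2 3 4; have := h 1 3 4; have := h 0 3 4
    simp_all [fivePoints, Matrix.det_fin_three, sub_eq_zero, neg_add_eq_zero, mul_comm, eq_comm]
  · rintro ⟨⟨hx₁, hy₁, hx₂, hy₂⟩, hx, hy, hxy⟩ i j k hij hik hjk
    fin_cases i <;> fin_cases j <;> fin_cases k <;>
      simp_all [fivePoints, Matrix.det_fin_three, sub_eq_zero, neg_add_eq_zero, mul_comm, eq_comm]

end ProjectivePlane

open SimpleGraph

theorem stmt_2_general (F : Type) [Field F] [Fintype F] [DecidableEq F] (q : ℕ)
    (hq : Fintype.card F = q) :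
    ∃ (G : SimpleGraph ({x : F // x ≠ 0} × {y : F // y ≠ 0})) (_ : DecidableRel G.Adj),
      (∀ u w : {x : F // x ≠ 0} × {y : F // y ≠ 0},
        G.Adj u w ↔ (u ≠ w ∧ ∀ i j k : Fin 5, i ≠ j → i ≠ k → j ≠ k →
          (Matrix.of
            ![(![![(1:F),0,0], ![0,1,0], ![0,0,1], ![1,u.1.1,u.2.1], ![1,w.1.1,w.2.1]]) i,
              (![![(1:F),0,0], ![0,1,0], ![0,0,1], ![1,u.1.1,u.2.1], ![1,w.1.1,w.2.1]]) j,
              (![![(1:F),0,0], ![0,1,0], ![0,0,1], ![1,u.1.1,u.2.1], ![1,w.1.1,w.2.1]]) k]).det ≠ 0)) ∧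
      G.IsSRGWith ((q - 1) ^ 2) ((q - 2) * (q - 3)) ((q - 4) ^ 2 + 1) ((q - 3) * (q - 4)) := by
  let e : {x : F // x ≠ 0} × {y : F // y ≠ 0} ≃ Fˣ × Fˣ :=
    (unitsEquivNeZero.prodCongr unitsEquivNeZero).symm
  refine ⟨(latinSquareCompl Fˣ).comap e, inferInstance, fun u w => ?_, ?_⟩
  · show _ ↔ u ≠ w ∧ InGeneralPosition (fivePoints (u.1 : F) u.2 w.1 w.2)
    rw [comap_adj, latinSquareCompl_units_adj_iff, inGeneralPosition_fivePoints_iff]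
    simp only [e, Equiv.prodCongr_symm, Equiv.prodCongr_apply, Prod.map_fst, Prod.map_snd,
      unitsEquivNeZero_symm_apply, Units.val_mk0]
    exact ⟨fun h => ⟨fun huw => h.1 (huw ▸ rfl), ⟨u.1.2, u.2.2, w.1.2, w.2.2⟩, h⟩, fun h => h.2.2⟩
  · have hn : Fintype.card Fˣ = q - 1 := by rw [Fintype.card_units, hq]
    have := (isSRGWith_latinSquareCompl (Γ := Fˣ)).of_iso (Iso.comap e _)
    simpa only [hn, Nat.sub_sub, Nat.reduceAdd] using this

/-- The graph G₁ on pairs (x,y) ∈ F_q* × F_q*, with (x₁,y₁) ~ (x₂,y₂) iff the two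
points are distinct and any three of e₁,e₂,e₃,(1,x₁,y₁),(1,x₂,y₂) are non-collinear,
is strongly regular with parameters ((q-1)², (q-2)(q-3), (q-4)²+1, (q-3)(q-4)). -/
theorem stmt_2 (F : Type) [Field F] [Fintype F] [DecidableEq F] (q : ℕ)
    (hq : Fintype.card F = q) (hodd : Odd q) (hq5 : 5 ≤ q) :
    ∃ (G : SimpleGraph ({x : F // x ≠ 0} × {y : F // y ≠ 0})) (_ : DecidableRel G.Adj),
      (∀ u w : {x : F // x ≠ 0} × {y : F // y ≠ 0},
        G.Adj u w ↔ (u ≠ w ∧ ∀ i j k : Fin 5, i ≠ j → i ≠ k → j ≠ k →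
          (Matrix.of
            ![(![![(1:F),0,0], ![0,1,0], ![0,0,1], ![1,u.1.1,u.2.1], ![1,w.1.1,w.2.1]]) i,
              (![![(1:F),0,0], ![0,1,0], ![0,0,1], ![1,u.1.1,u.2.1], ![1,w.1.1,w.2.1]]) j,
              (![![(1:F),0,0], ![0,1,0], ![0,0,1], ![1,u.1.1,u.2.1], ![1,w.1.1,w.2.1]]) k]).det ≠ 0)) ∧
      G.IsSRGWith ((q - 1) ^ 2) ((q - 2) * (q - 3)) ((q - 4) ^ 2 + 1) ((q - 3) * (q - 4)) :=
  stmt_2_general F q hq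
end

section
/- Let q ≥ 5 be an odd prime power, P_1 = {(1,x,y) : x,y ∈ F_q*} ⊆ PG(2,q), and C_1 the set of conics through e_1,e_2,e_3. For any point P ∈ P_1 and conic C ∈ C_1 with P ∉ C, the number of points of C ∩ P_1 joined to P (i.e., points Q of C ∩ P_1 such that no three of e_1,e_2,e_3,P,Q are collinear) is q-5, q-4, or q-3. -/
open Matrix

/-- The five points e₁,e₂,e₃,(1,P₁,P₂),(1,Q₁,Q₂) of PG(2,q). -/
def fivePts (F : Type) [Field F] (P Q : F × F) : Fin 5 → Fin 3 → F :=
  ![![1,0,0], ![0,1,0], ![0,0,1], ![1,P.1,P.2], ![1,Q.1,Q.2]]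

/-- P and Q are joined: distinct and no three of e₁,e₂,e₃,P,Q are collinear. -/
abbrev joinedPts (F : Type) [Field F] (P Q : F × F) : Prop :=
  P ≠ Q ∧ ∀ i j k : Fin 5, i ≠ j → i ≠ k → j ≠ k →
    (Matrix.of ![fivePts F P Q i, fivePts F P Q j, fivePts F P Q k]).det ≠ 0

/-- (1,x,y) lies on the conic through e₁,e₂,e₃ with matrix !![0,a,b;a,0,1;b,1,0]. -/
abbrev onConic (F : Type) [Field F] (a b : F) (P : F × F) : Prop :=
  ![1, P.1, P.2] ⬝ᵥ (!![0, a, b; a, 0, 1; b, 1, 0] *ᵥ ![1, P.1, P.2]) = 0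

/-!
In the affine chart `X₀ = 1` the conic is `a x + b y + x y = 0`, whose points with `x, y ≠ 0` form
the graph of `x ↦ -a x / (x + b)` over the `q - 2` abscissas `x ∉ {0, -b}`. Such a point `Q` fails
to be joined to `P` exactly when it lies on one of the lines `P e₃` (`x = P₁`), `P e₂` (`y = P₂`)
or `P e₁` (`P₁ y = P₂ x`). Each of these lines meets the graph in at most one point, so at most
three points are lost, and at least one is: on `P e₃` if `P₁ ≠ -b`, else on `P e₂` if `P₂ ≠ -a`,
else on `P e₁` at `x = -2b`.
-/

theorem FiniteField.two_ne_zero_of_odd_card {F : Type*} [Field F] [Fintype F]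
    (h : Odd (Fintype.card F)) : (2 : F) ≠ 0 :=
  Ring.two_ne_zero fun hc => by
    simp [Nat.odd_iff, FiniteField.even_card_of_char_two hc] at h

section

variable {F : Type} [Field F]

theorem joinedPts_iff {P Q : F × F} (hP1 : P.1 ≠ 0) (hP2 : P.2 ≠ 0) (hQ1 : Q.1 ≠ 0)
    (hQ2 : Q.2 ≠ 0) :
    joinedPts F P Q ↔ Q.1 ≠ P.1 ∧ Q.2 ≠ P.2 ∧ P.1 * Q.2 ≠ P.2 * Q.1 := by
  constructor
  · rintro ⟨-, h⟩
    have h₁ := h 2 3 4 (by decide) (by decide) (by decide)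
    have h₂ := h 1 3 4 (by decide) (by decide) (by decide)
    have h₀ := h 0 3 4 (by decide) (by decide) (by decide)
    simp only [fivePts, det_fin_three, of_apply, cons_val', cons_val_fin_one, cons_val_zero,
      cons_val_one, cons_val, one_mul, mul_one, zero_mul, sub_zero, add_zero, sub_self, zero_add,
      zero_sub] at h₀ h₁ h₂
    grind
  · rintro ⟨h₁, h₂, h₀⟩
    refine ⟨fun h => h₁ (h ▸ rfl), fun i j k hij hik hjk => ?_⟩
    fin_cases i <;> fin_cases j <;> fin_cases k <;> simp [fivePts, det_fin_three] <;> grind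

theorem onConic_iff (h2 : (2 : F) ≠ 0) (a b : F) (Q : F × F) :
    onConic F a b Q ↔ a * Q.1 + b * Q.2 + Q.1 * Q.2 = 0 := by
  have h : ![1, Q.1, Q.2] ⬝ᵥ (!![0, a, b; a, 0, 1; b, 1, 0] *ᵥ ![1, Q.1, Q.2]) =
      2 * (a * Q.1 + b * Q.2 + Q.1 * Q.2) := by
    simp only [dotProduct, mulVec, of_apply, cons_val', cons_val_fin_one, Fin.sum_univ_three,
      cons_val_zero, cons_val_one, cons_val, mul_one, one_mul, zero_mul, zero_add, add_zero]
    ring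
  rw [onConic, h, mul_eq_zero, or_iff_right h2]

def conicFun (a b x : F) : F := -a * x / (x + b)

variable {a b : F}

theorem conicFun_eq_iff {x : F} (y : F) (hx : x ≠ -b) :
    conicFun a b x = y ↔ -a * x = y * (x + b) :=
  div_eq_iff fun h => hx (eq_neg_of_add_eq_zero_left h)

theorem onConic_iff_eq_conicFun (h2 : (2 : F) ≠ 0) (ha : a ≠ 0) (x y : F) :
    (x ≠ 0 ∧ y ≠ 0 ∧ onConic F a b (x, y)) ↔ (x ≠ 0 ∧ x ≠ -b ∧ y = conicFun a b x) := by
  simp only [onConic_iff h2]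
  constructor
  · rintro ⟨hx, -, hC⟩
    have hxb : x ≠ -b := by
      rintro rfl
      exact mul_ne_zero ha hx (by linear_combination hC)
    exact ⟨hx, hxb, ((conicFun_eq_iff y hxb).2 (by linear_combination -hC)).symm⟩
  · rintro ⟨hx, hxb, rfl⟩
    have hC := (conicFun_eq_iff (a := a) _ hxb).1 rfl
    refine ⟨hx, fun hy => ?_, by linear_combination -hC⟩
    simp only [hy, zero_mul, neg_mul, neg_eq_zero] at hC
    exact mul_ne_zero ha hx hC

variable [Fintype F] [DecidableEq F]

def unjoinedAbscissas (a b : F) (P : F × F) : Finset F :=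
  ({0, -b}ᶜ : Finset F).filter fun x =>
    x = P.1 ∨ conicFun a b x = P.2 ∨ P.1 * conicFun a b x = P.2 * x

theorem onConic_joinedPts_iff (h2 : (2 : F) ≠ 0) (ha : a ≠ 0) {P : F × F} (hP1 : P.1 ≠ 0)
    (hP2 : P.2 ≠ 0) (Q : F × F) :
    (Q.1 ≠ 0 ∧ Q.2 ≠ 0 ∧ onConic F a b Q ∧ joinedPts F P Q) ↔
      Q.1 ∈ ({0, -b}ᶜ : Finset F) \ unjoinedAbscissas a b P ∧ Q.2 = conicFun a b Q.1 := by
  obtain ⟨x, y⟩ := Q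
  simp only [unjoinedAbscissas, Finset.mem_sdiff, Finset.mem_filter, Finset.mem_compl,
    Finset.mem_insert, Finset.mem_singleton, not_or]
  constructor
  · rintro ⟨hx, hy, hC, hJ⟩
    rw [joinedPts_iff hP1 hP2 hx hy] at hJ
    obtain ⟨-, hxb, rfl⟩ := (onConic_iff_eq_conicFun h2 ha x y).1 ⟨hx, hy, hC⟩
    tauto
  · rintro ⟨⟨⟨hx, hxb⟩, hJ⟩, rfl⟩
    obtain ⟨-, hy, hC⟩ := (onConic_iff_eq_conicFun h2 ha x _).2 ⟨hx, hxb, rfl⟩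
    rw [joinedPts_iff hP1 hP2 hx hy]
    tauto

theorem card_joined_eq (h2 : (2 : F) ≠ 0) (ha : a ≠ 0) {P : F × F} (hP1 : P.1 ≠ 0)
    (hP2 : P.2 ≠ 0) :
    (Finset.univ.filter fun Q : F × F => Q.1 ≠ 0 ∧ Q.2 ≠ 0 ∧ onConic F a b Q ∧
      joinedPts F P Q).card = (({0, -b}ᶜ : Finset F) \ unjoinedAbscissas a b P).card := by
  rw [← Finset.card_image_of_injective _ (fun x y h => congrArg Prod.fst h :
    Function.Injective fun x => (x, conicFun a b x))]
  congr 1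
  ext Q
  rw [Finset.mem_filter, Finset.mem_image, onConic_joinedPts_iff h2 ha hP1 hP2]
  constructor
  · rintro ⟨-, hQ, hQ2⟩
    exact ⟨Q.1, hQ, Prod.ext rfl hQ2.symm⟩
  · rintro ⟨x, hx, rfl⟩
    exact ⟨Finset.mem_univ _, hx, rfl⟩

theorem unjoinedAbscissas_subset (hb : b ≠ 0) {P : F × F} (hP2 : P.2 ≠ 0) :
    unjoinedAbscissas a b P ⊆ {P.1, -P.2 * b / (a + P.2), -a * P.1 / P.2 - b} := by
  intro x hx
  simp only [unjoinedAbscissas, Finset.mem_filter, Finset.mem_compl, Finset.mem_insert,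
    Finset.mem_singleton, not_or] at hx ⊢
  obtain ⟨⟨hx0, hxb⟩, hx | hx | hx⟩ := hx
  · exact Or.inl hx
  · rw [conicFun_eq_iff _ hxb] at hx
    have haP : a + P.2 ≠ 0 := fun h =>
      mul_ne_zero hP2 hb (by linear_combination -hx - x * h)
    exact Or.inr (Or.inl (by rw [eq_div_iff haP]; linear_combination -hx))
  · have hf := (conicFun_eq_iff (a := a) _ hxb).1 rfl
    have hx' : x * (-a * P.1) = x * (P.2 * (x + b)) := by
      linear_combination P.1 * hf + (x + b) * hx
    refine Or.inr (Or.inr ?_)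
    rw [eq_sub_iff_add_eq, eq_div_iff hP2]
    linear_combination -(mul_left_cancel₀ hx0 hx')

theorem unjoinedAbscissas_nonempty (h2 : (2 : F) ≠ 0) (ha : a ≠ 0) (hb : b ≠ 0) {P : F × F}
    (hP1 : P.1 ≠ 0) (hP2 : P.2 ≠ 0) : (unjoinedAbscissas a b P).Nonempty := by
  simp only [Finset.Nonempty, unjoinedAbscissas, Finset.mem_filter, Finset.mem_compl,
    Finset.mem_insert, Finset.mem_singleton, not_or]
  obtain hPb | hPb := ne_or_eq P.1 (-b)
  · exact ⟨P.1, ⟨hP1, hPb⟩, Or.inl rfl⟩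
  obtain hPa | hPa := eq_or_ne P.2 (-a)
  · have hb2 : -2 * b ≠ -b := fun h => hb (by linear_combination -h)
    have hf : conicFun a b (-2 * b) = -2 * a := (conicFun_eq_iff _ hb2).2 (by ring)
    refine ⟨-2 * b, ⟨mul_ne_zero (neg_ne_zero.2 h2) hb, hb2⟩, Or.inr (Or.inr ?_)⟩
    rw [hf, hPb, hPa]
    ring
  · have haP : a + P.2 ≠ 0 := fun h => hPa (by linear_combination h)
    set c := -P.2 * b / (a + P.2)
    have hc : c * (a + P.2) = -P.2 * b := div_mul_cancel₀ _ haP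
    have hcb : c ≠ -b := fun h => mul_ne_zero ha hb (by rw [h] at hc; linear_combination -hc)
    refine ⟨c, ⟨div_ne_zero (mul_ne_zero (neg_ne_zero.2 hP2) hb) haP, hcb⟩, Or.inr (Or.inl ?_)⟩
    exact (conicFun_eq_iff _ hcb).2 (by linear_combination -hc)

end

theorem stmt_3_general (F : Type) [Field F] [Fintype F] [DecidableEq F] (q : ℕ)
    (hq : Fintype.card F = q) (hodd : Odd q)
    (a b : F) (ha : a ≠ 0) (hb : b ≠ 0)
    (P : F × F) (hP1 : P.1 ≠ 0) (hP2 : P.2 ≠ 0) :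
    (Finset.univ.filter (fun Q : F × F => Q.1 ≠ 0 ∧ Q.2 ≠ 0 ∧ onConic F a b Q ∧
      joinedPts F P Q)).card ∈ ({q - 5, q - 4, q - 3} : Set ℕ) := by
  have h2 : (2 : F) ≠ 0 := FiniteField.two_ne_zero_of_odd_card (hq ▸ hodd)
  have hA : (({0, -b} : Finset F)ᶜ).card + 2 = q := by
    rw [← hq, ← Finset.card_compl_add_card, Finset.card_pair]
    exact fun h => hb (neg_eq_zero.1 h.symm)
  have hU1 := (unjoinedAbscissas_nonempty h2 ha hb hP1 hP2).card_pos
  have hU3 :=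
    (Finset.card_le_card (unjoinedAbscissas_subset (a := a) hb hP2)).trans Finset.card_le_three
  have hUA : unjoinedAbscissas a b P ⊆ {0, -b}ᶜ := Finset.filter_subset _ _
  rw [card_joined_eq h2 ha hP1 hP2, Finset.card_sdiff_of_subset hUA]
  simp only [Set.mem_insert_iff, Set.mem_singleton_iff]
  omega

/-- For any anti-flag (P, C) of (𝒫₁, 𝒞₁), the number of points of C ∩ 𝒫₁ joined to P
is q-5, q-4 or q-3. -/
theorem stmt_3 (F : Type) [Field F] [Fintype F] [DecidableEq F] (q : ℕ)
    (hq : Fintype.card F = q) (hodd : Odd q) (hq5 : 5 ≤ q)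
    (a b : F) (ha : a ≠ 0) (hb : b ≠ 0)
    (P : F × F) (hP1 : P.1 ≠ 0) (hP2 : P.2 ≠ 0) (hPC : ¬ onConic F a b P) :
    (Finset.univ.filter (fun Q : F × F => Q.1 ≠ 0 ∧ Q.2 ≠ 0 ∧ onConic F a b Q ∧
      joinedPts F P Q)).card ∈ ({q - 5, q - 4, q - 3} : Set ℕ) :=
  stmt_3_general F q hq hodd a b ha hb P hP1 hP2
end

section
/- Let q be an odd prime power and let G_2 be the graph on vertex set F_q^{2×2} where M ∼ N iff rank(M - N) = 2. Then G_2 is strongly regular with parameters v = q^4, k = q(q-1)(q^2-1), λ = q(q^3 - 2q^2 - q + 3), μ = q(q-1)(q^2 - q - 1). -/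
/-!
Translating by `M` identifies the common neighbours of `M` and `N` with the matrices `A` such
that `A` and `A - D` are both invertible, where `D = M - N`. This number is unchanged under
`D ↦ P * D * Q` for invertible `P`, `Q`, so only `D = 1` (adjacent) and `D = E₀₀` (non-adjacent)
need to be counted. By inclusion–exclusion it equals `q⁴ - 2s + z(D)`, where `s = q³ + q² - q`
counts the singular matrices and `z(D)` the `A` with `A` and `A - D` both singular. A singular
`A` with diagonal `(a, d)` has off-diagonal entries with `bc = ad`, an equation with `2q - 1`
solutions if `ad = 0` and `q - 1` otherwise; the second singularity condition reads `a + d = 1`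
for `D = 1` and `d = 0` for `D = E₀₀`, giving `z(1) = q² + q` and `z(E₀₀) = q(2q - 1)`.
-/

open Matrix Finset

theorem Finset.card_filter_univ_prod {α β : Type*} [Fintype α] [Fintype β] (P : α × β → Prop)
    [DecidablePred P] : #{x | P x} = ∑ a, #{b | P (a, b)} := by
  rw [card_filter, Fintype.sum_prod_type]
  exact sum_congr rfl fun a _ => (card_filter _ _).symm

theorem Finset.card_filter_snd_eq {α β : Type*} [Fintype α] [Fintype β] [DecidableEq β]
    (f : α → β) (P : α × β → Prop) [DecidablePred P] :
    #{p : α × β | p.2 = f p.1 ∧ P p} = #{a | P (a, f a)} := by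
  refine card_nbij' Prod.fst (fun a => (a, f a)) ?_ ?_ ?_ ?_
  · rintro ⟨a, b⟩ h
    simp only [coe_filter, mem_univ, true_and, Set.mem_ofPred] at h ⊢
    exact h.1 ▸ h.2
  · intro a h; simp_all
  · rintro ⟨a, b⟩ h
    simp_all
  · intro a _; rfl

theorem card_filter_mul_eq {F : Type*} [Field F] [Fintype F] [DecidableEq F] (s : F) :
    (#{p : F × F | p.1 * p.2 = s} : ℤ) =
      Fintype.card F - 1 + if s = 0 then (Fintype.card F : ℤ) else 0 := by
  -- a row `a ≠ 0` holds exactly one solution, the row `a = 0` all or none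
  have hrow (a : F) : (#{b : F | a * b = s} : ℤ) =
      1 + if a = 0 then (if s = 0 then (Fintype.card F : ℤ) else 0) - 1 else 0 := by
    by_cases ha : a = 0
    · subst ha; by_cases hs : s = 0 <;> simp [hs, eq_comm (a := (0 : F))]
    · have : ({b : F | a * b = s} : Finset F) = {s / a} := by
        ext b; simp [eq_div_iff ha, mul_comm]
      simp [this, ha]
  rw [card_filter_univ_prod]
  push_cast
  simp only [hrow, sum_add_distrib, sum_ite_eq', mem_univ, if_true, sum_const, card_univ,
    Int.nsmul_eq_mul, mul_one]
  ring

namespace Matrix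

section General

variable {n K : Type*} [Fintype n] [DecidableEq n] [Field K]

theorem rank_eq_card_iff_det_ne_zero {A : Matrix n n K} :
    A.rank = Fintype.card n ↔ A.det ≠ 0 := by
  refine ⟨fun h => ?_, rank_of_det_ne_zero⟩
  have hrange : LinearMap.range A.mulVecLin = ⊤ :=
    Submodule.eq_top_of_finrank_eq (by rw [← rank, h, Module.finrank_fintype_fun_eq_card])
  have hunit := mulVec_surjective_iff_isUnit.1 (LinearMap.range_eq_top.1 hrange)
  exact ((isUnit_iff_isUnit_det A).1 hunit).ne_zero

def invertibleDiffGraph (n K : Type*) [Fintype n] [DecidableEq n] [Nonempty n] [Field K] :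
    SimpleGraph (Matrix n n K) where
  Adj M N := (M - N).det ≠ 0
  symm := ⟨fun M N h => by
    rwa [← neg_sub, det_neg, mul_ne_zero_iff,
      and_iff_right (pow_ne_zero _ (neg_ne_zero.2 one_ne_zero))]⟩
  loopless := ⟨fun M => by simp⟩

variable [DecidableEq K]

instance [Nonempty n] (M N : Matrix n n K) : Decidable ((invertibleDiffGraph n K).Adj M N) :=
  inferInstanceAs (Decidable ((M - N).det ≠ 0))

variable [Fintype K]

def coinvertibleCount (D : Matrix n n K) : ℕ :=
  #{A : Matrix n n K | A.det ≠ 0 ∧ (A - D).det ≠ 0}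

theorem coinvertibleCount_units_mul_mul (P Q : (Matrix n n K)ˣ) (D : Matrix n n K) :
    coinvertibleCount ((P : Matrix n n K) * D * (Q : Matrix n n K)) = coinvertibleCount D := by
  have hP := ((isUnit_iff_isUnit_det _).1 P.isUnit).ne_zero
  have hQ := ((isUnit_iff_isUnit_det _).1 Q.isUnit).ne_zero
  refine (card_equiv ((Units.mulLeft P).trans (Units.mulRight Q)) fun A => ?_).symm
  simp [← Matrix.mul_sub, ← Matrix.sub_mul, hP, hQ]

theorem coinvertibleCount_eq (D : Matrix n n K) : (coinvertibleCount D : ℤ) =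
    Fintype.card (Matrix n n K) - 2 * #{A : Matrix n n K | A.det = 0}
      + #{A : Matrix n n K | A.det = 0 ∧ (A - D).det = 0} := by
  have htrans : #{A : Matrix n n K | (A - D).det = 0} = #{A : Matrix n n K | A.det = 0} :=
    card_equiv (Equiv.subRight D) (by simp)
  have hunion := card_union_add_card_inter {A : Matrix n n K | A.det = 0} {A | (A - D).det = 0}
  rw [← filter_or, ← filter_and, htrans] at hunion
  have hcompl := card_filter_add_card_filter_not (s := univ)
    (p := fun A : Matrix n n K => A.det = 0 ∨ (A - D).det = 0)
  simp only [not_or, card_univ] at hcompl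
  simp only [coinvertibleCount, ne_eq]
  omega

variable [Nonempty n]

theorem degree_invertibleDiffGraph (M : Matrix n n K) :
    (invertibleDiffGraph n K).degree M = #{A : Matrix n n K | A.det ≠ 0} := by
  rw [← SimpleGraph.card_neighborFinset_eq_degree, SimpleGraph.neighborFinset_eq_filter]
  exact card_equiv (Equiv.subLeft M) fun A => by
    rw [Finset.mem_filter]; simp [invertibleDiffGraph]

theorem card_commonNeighbors_invertibleDiffGraph (M N : Matrix n n K) :
    Fintype.card ((invertibleDiffGraph n K).commonNeighbors M N) =
      coinvertibleCount (M - N) := by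
  rw [coinvertibleCount, ← Fintype.card_subtype]
  refine Fintype.card_congr (Equiv.subtypeEquiv (Equiv.subLeft M) fun A => ?_)
  simp [invertibleDiffGraph, SimpleGraph.commonNeighbors]

end General

def entriesEquiv {α : Type*} : Matrix (Fin 2) (Fin 2) α ≃ (α × α) × (α × α) where
  toFun A := ((A 0 0, A 1 1), (A 0 1, A 1 0))
  invFun x := !![x.1.1, x.2.1; x.2.2, x.1.2]
  left_inv A := by ext i j; fin_cases i <;> fin_cases j <;> rfl
  right_inv x := rfl

theorem card_matrix_fin_two {α : Type*} [Fintype α] :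
    Fintype.card (Matrix (Fin 2) (Fin 2) α) = Fintype.card α ^ 4 := by
  rw [Fintype.card_congr entriesEquiv, Fintype.card_prod, Fintype.card_prod]
  ring

variable {F : Type*} [Field F]

theorem exists_isUnit_col_zero_eq {u : Fin 2 → F} (hu : u ≠ 0) :
    ∃ P : Matrix (Fin 2) (Fin 2) F, IsUnit P ∧ P.col 0 = u := by
  have hcol (a : F) : (!![u 0, a; u 1, 1 - a]).col 0 = u := by
    ext i; fin_cases i <;> rfl
  by_cases h0 : u 0 = 0
  · have h1 : u 1 ≠ 0 := fun h1 => hu (by ext i; fin_cases i <;> assumption)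
    refine ⟨_, ?_, hcol 1⟩
    simp [isUnit_iff_isUnit_det, det_fin_two_of, h0, h1]
  · refine ⟨_, ?_, hcol 0⟩
    simp [isUnit_iff_isUnit_det, det_fin_two_of, h0]

theorem exists_eq_vecMulVec_of_det_eq_zero {D : Matrix (Fin 2) (Fin 2) F} (hD : D ≠ 0)
    (hdet : D.det = 0) : ∃ u v : Fin 2 → F, u ≠ 0 ∧ v ≠ 0 ∧ D = vecMulVec u v := by
  obtain ⟨i, j, hij⟩ : ∃ i j, D i j ≠ 0 := by
    by_contra! h
    exact hD (ext h)
  refine ⟨D.col j, (D i j)⁻¹ • D.row i, fun h => hij (congrFun h i),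
    fun h => hij (by simpa [hij] using congrFun h j), ?_⟩
  rw [det_fin_two] at hdet
  ext k l
  simp only [vecMulVec_apply, col_apply, row_apply, Pi.smul_apply, smul_eq_mul]
  field_simp
  -- `D k l * D i j = D k j * D i l` is either trivial or `± det D = 0`
  fin_cases i <;> fin_cases j <;> fin_cases k <;> fin_cases l <;>
    simp only [Fin.zero_eta, Fin.mk_one] <;>
    first | ring1 | linear_combination hdet | linear_combination -hdet

theorem exists_units_mul_single_mul {D : Matrix (Fin 2) (Fin 2) F} (hD : D ≠ 0)
    (hdet : D.det = 0) : ∃ P Q : (Matrix (Fin 2) (Fin 2) F)ˣ,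
      D = (P : Matrix (Fin 2) (Fin 2) F) * single 0 0 1 * (Q : Matrix (Fin 2) (Fin 2) F) := by
  obtain ⟨u, v, hu, hv, rfl⟩ := exists_eq_vecMulVec_of_det_eq_zero hD hdet
  obtain ⟨P, hP, hPu⟩ := exists_isUnit_col_zero_eq hu
  obtain ⟨Q, hQ, hQv⟩ := exists_isUnit_col_zero_eq hv
  refine ⟨hP.unit, ((isUnit_transpose Q).2 hQ).unit, ?_⟩
  rw [IsUnit.unit_spec, IsUnit.unit_spec, single_eq_single_vecMulVec_single, mul_vecMulVec,
    vecMulVec_mul, mulVec_single_one, single_one_vecMul, row_transpose, hPu, hQv]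

variable [Fintype F] [DecidableEq F]

theorem card_det_eq_zero_and_diag (φ : F × F → Prop) [DecidablePred φ] :
    (#{A : Matrix (Fin 2) (Fin 2) F | A.det = 0 ∧ φ (A 0 0, A 1 1)} : ℤ) =
      (Fintype.card F - 1) * #{p : F × F | φ p}
        + Fintype.card F * #{p : F × F | φ p ∧ p.1 * p.2 = 0} := by
  have hentries : #{A : Matrix (Fin 2) (Fin 2) F | A.det = 0 ∧ φ (A 0 0, A 1 1)} =
      #{x : (F × F) × (F × F) | φ x.1 ∧ x.2.1 * x.2.2 = x.1.1 * x.1.2} :=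
    card_equiv entriesEquiv fun A => by
      simp only [mem_filter, mem_univ, true_and, det_fin_two, sub_eq_zero]
      exact and_comm.trans (and_congr Iff.rfl eq_comm)
  have hfiber (p : F × F) : #{b : F × F | φ p ∧ b.1 * b.2 = p.1 * p.2} =
      if φ p then #{b : F × F | b.1 * b.2 = p.1 * p.2} else 0 := by
    by_cases hp : φ p <;> simp [hp]
  rw [hentries, card_filter_univ_prod]
  simp only [hfiber]
  push_cast
  simp only [card_filter_mul_eq]
  simp only [card_filter, Nat.cast_sum, mul_sum, ← sum_add_distrib]
  refine sum_congr rfl fun p _ => ?_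
  by_cases hp : φ p <;> by_cases h0 : p.1 * p.2 = 0 <;> simp only [hp, h0] <;> simp

theorem card_det_eq_zero :
    (#{A : Matrix (Fin 2) (Fin 2) F | A.det = 0} : ℤ) =
      Fintype.card F ^ 3 + Fintype.card F ^ 2 - Fintype.card F := by
  have h := card_det_eq_zero_and_diag (F := F) fun _ => True
  simp only [and_true, true_and, filter_true] at h
  rw [h, card_filter_mul_eq]
  simp only [card_univ, Fintype.card_prod, Nat.cast_mul, if_pos]
  ring

theorem card_det_eq_zero_and_eq_apply (f : F → F) :
    (#{A : Matrix (Fin 2) (Fin 2) F | A.det = 0 ∧ A 1 1 = f (A 0 0)} : ℤ) =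
      (Fintype.card F - 1) * Fintype.card F + Fintype.card F * #{a | a * f a = 0} := by
  have hgraph : #{p : F × F | p.2 = f p.1} = Fintype.card F := by
    simpa using card_filter_snd_eq f fun _ => True
  rw [card_det_eq_zero_and_diag fun p => p.2 = f p.1, hgraph, card_filter_snd_eq]

theorem card_det_eq_zero_and_det_sub_one_eq_zero :
    (#{A : Matrix (Fin 2) (Fin 2) F | A.det = 0 ∧ (A - 1).det = 0} : ℤ) =
      Fintype.card F ^ 2 + Fintype.card F := by
  have hcond (A : Matrix (Fin 2) (Fin 2) F) :
      A.det = 0 ∧ (A - 1).det = 0 ↔ A.det = 0 ∧ A 1 1 = 1 - A 0 0 := by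
    rw [det_fin_two, det_fin_two]
    simp only [sub_apply, one_apply_eq, one_apply_ne zero_ne_one, one_apply_ne one_ne_zero,
      sub_zero]
    constructor <;> rintro ⟨h, h'⟩ <;> refine ⟨h, ?_⟩ <;> linear_combination h - h'
  have hroots : ({a : F | a * (1 - a) = 0} : Finset F) = {0, 1} := by
    ext a; simp [sub_eq_zero, eq_comm (a := (1 : F))]
  rw [filter_congr fun A _ => hcond A, card_det_eq_zero_and_eq_apply, hroots,
    card_pair zero_ne_one]
  ring

theorem card_det_eq_zero_and_det_sub_single_eq_zero :
    (#{A : Matrix (Fin 2) (Fin 2) F | A.det = 0 ∧ (A - single 0 0 1).det = 0} : ℤ) =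
      Fintype.card F * (2 * Fintype.card F - 1) := by
  have hcond (A : Matrix (Fin 2) (Fin 2) F) :
      A.det = 0 ∧ (A - single 0 0 1).det = 0 ↔ A.det = 0 ∧ A 1 1 = 0 := by
    rw [det_fin_two, det_fin_two]
    have h01 : (0 : Fin 2) ≠ 1 := zero_ne_one
    simp only [sub_apply, single_apply_same, single_apply_of_row_ne h01,
      single_apply_of_col_ne _ _ h01, sub_zero]
    constructor <;> rintro ⟨h, h'⟩ <;> refine ⟨h, ?_⟩ <;> linear_combination h - h'
  rw [filter_congr fun A _ => hcond A, card_det_eq_zero_and_eq_apply fun _ => 0]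
  simp only [mul_zero, filter_true, card_univ]
  ring

theorem card_det_ne_zero :
    (#{A : Matrix (Fin 2) (Fin 2) F | A.det ≠ 0} : ℤ) =
      Fintype.card F ^ 4 - Fintype.card F ^ 3 - Fintype.card F ^ 2 + Fintype.card F := by
  have h := card_filter_add_card_filter_not (s := univ) fun A : Matrix (Fin 2) (Fin 2) F =>
    A.det = 0
  rw [card_univ, card_matrix_fin_two] at h
  have hz : (#{A : Matrix (Fin 2) (Fin 2) F | A.det = 0} : ℤ) + #{A : Matrix (Fin 2) (Fin 2) F | ¬A.det = 0} =
      Fintype.card F ^ 4 := by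
    exact_mod_cast h
  rw [card_det_eq_zero] at hz
  simp only [ne_eq]
  linarith

theorem coinvertibleCount_of_det_ne_zero {D : Matrix (Fin 2) (Fin 2) F} (hD : D.det ≠ 0) :
    (coinvertibleCount D : ℤ) = Fintype.card F ^ 4 - 2 * Fintype.card F ^ 3
      - Fintype.card F ^ 2 + 3 * Fintype.card F := by
  have hunit : IsUnit D := (isUnit_iff_isUnit_det D).2 hD.isUnit
  rw [← hunit.unit_spec, ← mul_one (hunit.unit : Matrix (Fin 2) (Fin 2) F), ← mul_one (_ * 1),
    ← Units.val_one, coinvertibleCount_units_mul_mul, Units.val_one, coinvertibleCount_eq,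
    card_matrix_fin_two, card_det_eq_zero, card_det_eq_zero_and_det_sub_one_eq_zero]
  push_cast
  ring

theorem coinvertibleCount_of_det_eq_zero {D : Matrix (Fin 2) (Fin 2) F} (hD : D ≠ 0)
    (hdet : D.det = 0) :
    (coinvertibleCount D : ℤ) = Fintype.card F ^ 4 - 2 * Fintype.card F ^ 3 + Fintype.card F := by
  obtain ⟨P, Q, rfl⟩ := exists_units_mul_single_mul hD hdet
  rw [coinvertibleCount_units_mul_mul, coinvertibleCount_eq, card_matrix_fin_two,
    card_det_eq_zero, card_det_eq_zero_and_det_sub_single_eq_zero]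
  push_cast
  ring

end Matrix

/-- The graph G₂ on 2×2 matrices over F_q, with M ~ N iff rank(M - N) = 2, is
strongly regular with parameters (q⁴, q(q-1)(q²-1), q(q³-2q²-q+3), q(q-1)(q²-q-1)). -/
theorem stmt_10 (F : Type) [Field F] [Fintype F] [DecidableEq F] (q : ℕ)
    (hq : Fintype.card F = q) (hodd : Odd q) :
    ∃ (G : SimpleGraph (Matrix (Fin 2) (Fin 2) F)) (_ : DecidableRel G.Adj),
      (∀ M N : Matrix (Fin 2) (Fin 2) F, G.Adj M N ↔ (M - N).rank = 2) ∧
      G.IsSRGWith (q ^ 4) (q * (q - 1) * (q ^ 2 - 1))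
        (q * (q ^ 3 - 2 * q ^ 2 - q + 3)) (q * ((q - 1) * (q ^ 2 - q - 1))) := by
  have hq3 : 3 ≤ q := by
    have := hq ▸ Fintype.one_lt_card (α := F)
    obtain ⟨m, rfl⟩ := hodd
    omega
  refine ⟨invertibleDiffGraph (Fin 2) F, inferInstance, fun M N => ?_,
    ⟨?_, fun M => ?_, fun M N hadj => ?_, fun M N hne hnadj => ?_⟩⟩
  · exact (rank_eq_card_iff_det_ne_zero (n := Fin 2)).symm
  · rw [card_matrix_fin_two, hq]
  · have h1 : 1 ≤ q := by omega
    have h2 : 1 ≤ q ^ 2 := Nat.one_le_pow _ _ (by omega)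
    rw [degree_invertibleDiffGraph]
    zify [h1, h2]
    rw [card_det_ne_zero, hq]
    ring
  · have h1 : 2 * q ^ 2 ≤ q ^ 3 := by nlinarith
    have h2 : q ≤ q ^ 3 - 2 * q ^ 2 := by zify [h1]; nlinarith
    rw [card_commonNeighbors_invertibleDiffGraph]
    zify [h1, h2]
    rw [coinvertibleCount_of_det_ne_zero hadj, hq]
    ring
  · have h1 : 1 ≤ q := by omega
    have h2 : q ≤ q ^ 2 := by nlinarith
    have h3 : 1 ≤ q ^ 2 - q := by zify [h2]; nlinarith
    rw [card_commonNeighbors_invertibleDiffGraph]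
    zify [h1, h2, h3]
    rw [coinvertibleCount_of_det_eq_zero (sub_ne_zero.2 hne) (not_not.1 hnadj), hq]
    ring
end

section
/- Let q be an odd prime power, L_1 the set of lines of PG(3,q) skew to the line (I_2|0), and H_1 the set of hyperbolic quadrics containing (I_2|0) (each identified with its set of lines in L_1). Then (L_1, H_1) is a generalized partial geometry PG(q-1, q(q^2-1)-1; q-2, q-1, q): each block has q points, each point is on q(q^2-1) blocks, two points lie on at most one common block, and every anti-flag (L, H) has exactly q-2, q-1, or q points of H joined to L, with all three values attained. -/
open Matrix

/-- Two points are joined if they are distinct and lie on a common block. -/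
abbrev joinedIn {V : Type} [DecidableEq V] (Bl : Finset (Finset V)) (P Q : V) : Prop :=
  P ≠ Q ∧ ∃ b ∈ Bl, P ∈ b ∧ Q ∈ b

/-- (𝒫, ℬ) is a generalized partial geometry PG(s,t;α₁,…,α_r) with {α₁,…,α_r} = αs. -/
def IsGPG {V : Type} [Fintype V] [DecidableEq V] (Bl : Finset (Finset V))
    (s t : ℕ) (αs : Finset ℕ) : Prop :=
  (∀ P Q : V, P ≠ Q → (Bl.filter fun b => P ∈ b ∧ Q ∈ b).card ≤ 1) ∧
  (∀ b ∈ Bl, b.card = s + 1) ∧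
  (∀ P : V, (Bl.filter fun b => P ∈ b).card = t + 1) ∧
  (∀ (P : V), ∀ b ∈ Bl, P ∉ b → (b.filter fun Q => joinedIn Bl P Q).card ∈ αs) ∧
  (∀ α ∈ αs, ∃ (P : V), ∃ b ∈ Bl, P ∉ b ∧ (b.filter fun Q => joinedIn Bl P Q).card = α)

/-!
Write `J₂ = [[0, 1], [-1, 0]]`. Replacing `P` by `N` changes `Bᵀ Nᵀ + N B + C` by `X + Xᵀ` with
`X = (N - P) B`, and for `2 ≠ 0` the antisymmetric `2 × 2` matrices are the multiples of `J₂`; so a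
block through `P` is the affine line `P + F • J₂ B⁻¹` of `M₂(F)`. Conversely every affine line with
invertible direction is a block, hence two points are joined iff their difference is invertible.
Everything is then counted on lines: a block has `q` points; the blocks through `N` partition the
`|GL₂(F)| = (q² - 1)(q² - q)` points joined to `N`, `q - 1` per block; and on a block `N + F • D`
the points not joined to `P` are the roots of `μ ↦ det (N - P + μ D)`, a quadratic with leading
coefficient `det D ≠ 0`. Companion matrices of `μ (μ + 1)`, `μ²` and `μ² - c`, `c` a nonsquare,
have `2`, `1` and `0` such roots.
-/

open Finset

section AffineLine

variable (F : Type) {V : Type} [Field F] [Fintype F] [AddCommGroup V] [Module F V] [DecidableEq V]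

def affineLine (P D : V) : Finset V := univ.image fun μ : F => P + μ • D

variable {F}

lemma mem_affineLine {P D X : V} : X ∈ affineLine F P D ↔ ∃ μ : F, P + μ • D = X := by
  simp [affineLine]

omit [Fintype F] [DecidableEq V] in
lemma injective_add_smul {D : V} (hD : D ≠ 0) (P : V) :
    Function.Injective fun μ : F => P + μ • D :=
  fun _ _ h => smul_left_injective F hD (add_left_cancel h)

lemma card_affineLine {D : V} (hD : D ≠ 0) (P : V) :
    #(affineLine F P D) = Fintype.card F := by
  rw [affineLine, card_image_of_injective _ (injective_add_smul hD P), card_univ]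

lemma affineLine_eq_of_mem_of_mem {A D P Q : V} (hP : P ∈ affineLine F A D)
    (hQ : Q ∈ affineLine F A D) (hPQ : P ≠ Q) :
    affineLine F A D = affineLine F P (Q - P) := by
  obtain ⟨a, rfl⟩ := mem_affineLine.mp hP
  obtain ⟨b, rfl⟩ := mem_affineLine.mp hQ
  have hab : b - a ≠ 0 := sub_ne_zero.mpr fun h => hPQ (by rw [h])
  ext X
  simp only [mem_affineLine]
  constructor
  · rintro ⟨μ, rfl⟩
    exact ⟨(μ - a) / (b - a), by match_scalars <;> field_simp <;> ring⟩
  · rintro ⟨ν, rfl⟩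
    exact ⟨a + ν * (b - a), by module⟩

end AffineLine

lemma card_filter_mem_mul_eq_card_filter_joinedIn {V : Type} [Fintype V] [DecidableEq V]
    {Bl : Finset (Finset V)} {k : ℕ}
    (hBl : ∀ P Q : V, P ≠ Q → #{b ∈ Bl | P ∈ b ∧ Q ∈ b} ≤ 1) (hk : ∀ b ∈ Bl, #b = k) (P : V) :
    #{b ∈ Bl | P ∈ b} * (k - 1) = #{Q | joinedIn Bl P Q} := by
  have hunion : ({Q | joinedIn Bl P Q} : Finset V) = {b ∈ Bl | P ∈ b}.biUnion (·.erase P) := by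
    ext Q
    simp only [mem_filter, mem_univ, true_and, mem_biUnion, mem_erase]
    constructor
    · rintro ⟨hPQ, b, hb, hP, hQ⟩
      exact ⟨b, ⟨hb, hP⟩, Ne.symm hPQ, hQ⟩
    · rintro ⟨b, ⟨hb, hP⟩, hQP, hQ⟩
      exact ⟨Ne.symm hQP, b, hb, hP, hQ⟩
  have hdisj : (({b ∈ Bl | P ∈ b} : Finset _) : Set (Finset V)).PairwiseDisjoint (·.erase P) := by
    intro b₁ hb₁ b₂ hb₂ hne
    refine disjoint_left.mpr fun Q hQ₁ hQ₂ => hne ?_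
    rw [mem_erase] at hQ₁ hQ₂
    rw [mem_coe, mem_filter] at hb₁ hb₂
    exact card_le_one.mp (hBl P Q (Ne.symm hQ₁.1)) b₁ (mem_filter.mpr ⟨hb₁.1, hb₁.2, hQ₁.2⟩)
      b₂ (mem_filter.mpr ⟨hb₂.1, hb₂.2, hQ₂.2⟩)
  rw [hunion, card_biUnion hdisj, sum_const_nat]
  intro b hb
  rw [mem_filter] at hb
  rw [card_erase_of_mem hb.2, hk b hb.1]

lemma card_filter_det_add_smul_eq_zero_le {F n : Type} [Field F] [DecidableEq F]
    [Fintype F] [Fintype n] [DecidableEq n] (A : Matrix n n F) {D : Matrix n n F}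
    (hD : IsUnit D.det) : #{μ : F | (A + μ • D).det = 0} ≤ Fintype.card n := by
  have hcharpoly : ∀ μ : F, (A + μ • D).det = (-(A * D⁻¹)).charpoly.eval μ * D.det := by
    intro μ
    rw [eval_charpoly, ← det_mul, sub_neg_eq_add, add_mul, Matrix.mul_assoc,
      nonsing_inv_mul _ hD, Matrix.mul_one, scalar_apply, ← smul_eq_diagonal_mul, add_comm]
  calc #{μ : F | (A + μ • D).det = 0}
      ≤ (-(A * D⁻¹)).charpoly.natDegree := by
        refine Polynomial.card_le_degree_of_subset_roots fun μ hμ => ?_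
        rw [Polynomial.mem_roots (charpoly_monic _).ne_zero, Polynomial.IsRoot]
        have hμ' := (mem_filter.mp hμ).2
        rw [hcharpoly] at hμ'
        exact (mul_eq_zero.mp hμ').resolve_right hD.ne_zero
    _ = Fintype.card n := charpoly_natDegree_eq_dim _

section InvertibleLines

variable {F n : Type} [Field F] [Fintype F] [DecidableEq F] [Fintype n] [DecidableEq n]

variable (F n) in
def invertibleLines : Finset (Finset (Matrix n n F)) :=
  (univ.filter fun PD : Matrix n n F × Matrix n n F => IsUnit PD.2.det).image
    fun PD => affineLine F PD.1 PD.2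

lemma mem_invertibleLines {b : Finset (Matrix n n F)} :
    b ∈ invertibleLines F n ↔ ∃ P D : Matrix n n F, IsUnit D.det ∧ affineLine F P D = b := by
  simp [invertibleLines]

omit [Fintype F] [DecidableEq F] in
lemma ne_zero_of_isUnit_det [Nonempty n] {D : Matrix n n F} (hD : IsUnit D.det) : D ≠ 0 := by
  rintro rfl
  simp at hD

lemma card_of_mem_invertibleLines [Nonempty n] {b : Finset (Matrix n n F)}
    (hb : b ∈ invertibleLines F n) : #b = Fintype.card F := by
  obtain ⟨P, D, hD, rfl⟩ := mem_invertibleLines.mp hb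
  exact card_affineLine (ne_zero_of_isUnit_det hD) P

lemma joinedIn_invertibleLines_iff [Nonempty n] {P Q : Matrix n n F} :
    joinedIn (invertibleLines F n) P Q ↔ IsUnit (Q - P).det := by
  constructor
  · rintro ⟨hPQ, b, hb, hP, hQ⟩
    obtain ⟨A, D, hD, rfl⟩ := mem_invertibleLines.mp hb
    obtain ⟨a, rfl⟩ := mem_affineLine.mp hP
    obtain ⟨c, rfl⟩ := mem_affineLine.mp hQ
    have hac : c - a ≠ 0 := sub_ne_zero.mpr fun h => hPQ (by rw [h])
    rw [show A + c • D - (A + a • D) = (c - a) • D by module, det_smul]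
    exact ((Ne.isUnit hac).pow _).mul hD
  · intro h
    refine ⟨fun hPQ => ?_, affineLine F P (Q - P), mem_invertibleLines.mpr ⟨P, Q - P, h, rfl⟩,
      mem_affineLine.mpr ⟨0, by simp⟩, mem_affineLine.mpr ⟨1, by simp⟩⟩
    subst hPQ
    simp at h

lemma card_filter_mem_mem_invertibleLines_le_one {P Q : Matrix n n F} (hPQ : P ≠ Q) :
    #{b ∈ invertibleLines F n | P ∈ b ∧ Q ∈ b} ≤ 1 := by
  refine card_le_one.mpr fun b₁ hb₁ b₂ hb₂ => ?_
  rw [mem_filter] at hb₁ hb₂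
  obtain ⟨A₁, D₁, -, rfl⟩ := mem_invertibleLines.mp hb₁.1
  obtain ⟨A₂, D₂, -, rfl⟩ := mem_invertibleLines.mp hb₂.1
  rw [affineLine_eq_of_mem_of_mem hb₁.2.1 hb₁.2.2 hPQ,
    affineLine_eq_of_mem_of_mem hb₂.2.1 hb₂.2.2 hPQ]

lemma card_filter_isUnit_det_sub (N : Matrix n n F) :
    #{Q : Matrix n n F | IsUnit (Q - N).det} = Nat.card (GL n F) := by
  rw [Nat.card_eq_fintype_card, ← card_univ]
  symm
  refine card_bij (fun u _ => (u : Matrix n n F) + N) (fun u _ => ?_)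
    (fun u _ v _ h => Units.ext (add_right_cancel h)) (fun Q hQ => ?_)
  · simpa using u.isUnit.map detMonoidHom
  · have hQ : IsUnit (Q - N) := (isUnit_iff_isUnit_det _).mpr (mem_filter.mp hQ).2
    exact ⟨hQ.unit, mem_univ _, by simp⟩

lemma card_filter_mem_invertibleLines_mul [Nonempty n] (P : Matrix n n F) :
    #{b ∈ invertibleLines F n | P ∈ b} * (Fintype.card F - 1) = Nat.card (GL n F) := by
  rw [card_filter_mem_mul_eq_card_filter_joinedIn
    (fun _ _ => card_filter_mem_mem_invertibleLines_le_one)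
    (fun _ => card_of_mem_invertibleLines) P, ← card_filter_isUnit_det_sub P]
  simp only [joinedIn_invertibleLines_iff]

lemma card_filter_joinedIn_affineLine [Nonempty n] (N : Matrix n n F) {D : Matrix n n F}
    (hD : IsUnit D.det) (P : Matrix n n F) :
    #{Q ∈ affineLine F N D | joinedIn (invertibleLines F n) P Q}
      = Fintype.card F - #{μ : F | (N - P + μ • D).det = 0} := by
  rw [affineLine, filter_image,
    card_image_of_injective _ (injective_add_smul (ne_zero_of_isUnit_det hD) N)]
  simp only [joinedIn_invertibleLines_iff, isUnit_iff_ne_zero, add_sub_right_comm]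
  rw [filter_not, card_sdiff_of_subset (filter_subset _ _), card_univ]

lemma card_filter_joinedIn_mem_Icc [Nonempty n] {b : Finset (Matrix n n F)}
    (hb : b ∈ invertibleLines F n) (P : Matrix n n F) :
    #{Q ∈ b | joinedIn (invertibleLines F n) P Q}
      ∈ Icc (Fintype.card F - Fintype.card n) (Fintype.card F) := by
  obtain ⟨N, D, hD, rfl⟩ := mem_invertibleLines.mp hb
  rw [card_filter_joinedIn_affineLine N hD P, mem_Icc]
  exact ⟨Nat.sub_le_sub_left (card_filter_det_add_smul_eq_zero_le (N - P) hD) _, Nat.sub_le _ _⟩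

lemma exists_antiflag_card_eq [Nonempty n] {A : Matrix n n F} (hA : ∀ c : F, A ≠ c • 1) :
    ∃ P, ∃ b ∈ invertibleLines F n, P ∉ b ∧
      #{Q ∈ b | joinedIn (invertibleLines F n) P Q}
        = Fintype.card F - #{μ : F | (A + μ • 1).det = 0} := by
  refine ⟨-A, affineLine F 0 1, mem_invertibleLines.mpr ⟨0, 1, by simp, rfl⟩, ?_, ?_⟩
  · intro h
    obtain ⟨μ, hμ⟩ := mem_affineLine.mp h
    exact hA (-μ) (by rw [neg_smul, ← zero_add (μ • 1), hμ, neg_neg])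
  · rw [card_filter_joinedIn_affineLine 0 (by simp) (-A), zero_sub, neg_neg]

end InvertibleLines

section Quadric

variable {F : Type} [Field F] [Fintype F] [DecidableEq F]

variable (F) in
def J₂ : Matrix (Fin 2) (Fin 2) F := !![0, 1; -1, 0]

omit [Fintype F] [DecidableEq F] in
lemma det_J₂ : (J₂ F).det = 1 := by
  simp [J₂, det_fin_two_of]

omit [Fintype F] [DecidableEq F] in
lemma transpose_add_self_eq_zero_iff (h2 : (2 : F) ≠ 0) (M : Matrix (Fin 2) (Fin 2) F) :
    Mᵀ + M = 0 ↔ ∃ μ : F, μ • J₂ F = M := by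
  rw [M.eta_fin_two]
  simp only [J₂, ← Matrix.ext_iff, Fin.forall_fin_two]
  simp [← two_mul, h2, eq_comm (a := (0 : F)), neg_eq_iff_add_eq_zero, add_comm]
  tauto

/-- The line `(N | I₂)` of `PG(3, q)` lies on the quadric with Gram matrix `[[0, B], [Bᵀ, C]]`
iff `Bᵀ Nᵀ + N B + C = 0`. -/
def quadricBlock (B C : Matrix (Fin 2) (Fin 2) F) : Finset (Matrix (Fin 2) (Fin 2) F) :=
  {N | Bᵀ * Nᵀ + N * B + C = 0}

lemma quadricBlock_eq_affineLine (h2 : (2 : F) ≠ 0) {B C P : Matrix (Fin 2) (Fin 2) F}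
    (hB : IsUnit B.det) (hP : P ∈ quadricBlock B C) :
    quadricBlock B C = affineLine F P (J₂ F * B⁻¹) := by
  have hP' : Bᵀ * Pᵀ + P * B + C = 0 := (mem_filter.mp hP).2
  ext N
  have hshift : Bᵀ * Nᵀ + N * B + C = ((N - P) * B)ᵀ + (N - P) * B := by
    rw [← sub_zero (Bᵀ * Nᵀ + N * B + C), ← hP', transpose_mul, transpose_sub]
    noncomm_ring
  simp only [quadricBlock, mem_filter, mem_univ, true_and, hshift,
    transpose_add_self_eq_zero_iff h2, mem_affineLine]
  refine exists_congr fun μ => ?_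
  rw [← smul_mul, ← eq_sub_iff_add_eq', eq_comm]
  constructor
  · intro h
    rw [← h, Matrix.mul_assoc, mul_nonsing_inv _ hB, Matrix.mul_one]
  · intro h
    rw [← h, Matrix.mul_assoc, nonsing_inv_mul _ hB, Matrix.mul_one]

lemma neg_half_smul_mul_inv_mem_quadricBlock (h2 : (2 : F) ≠ 0)
    {B C : Matrix (Fin 2) (Fin 2) F} (hB : IsUnit B.det) (hC : C.IsSymm) :
    (-(2 : F)⁻¹ • C) * B⁻¹ ∈ quadricBlock B C := by
  have hPB : (-(2 : F)⁻¹ • C) * B⁻¹ * B = -(2 : F)⁻¹ • C := by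
    rw [Matrix.mul_assoc, nonsing_inv_mul _ hB, Matrix.mul_one]
  have hhalf : (2 : F)⁻¹ + 2⁻¹ = 1 := by rw [← two_mul, mul_inv_cancel₀ h2]
  simp only [quadricBlock, mem_filter, mem_univ, true_and]
  rw [← transpose_mul, hPB, transpose_smul, hC.eq, ← add_smul, ← neg_add, hhalf, neg_one_smul,
    neg_add_cancel]

lemma quadricBlock_inv_mul_J₂ (h2 : (2 : F) ≠ 0) {D : Matrix (Fin 2) (Fin 2) F}
    (hD : IsUnit D.det) (P : Matrix (Fin 2) (Fin 2) F) :
    quadricBlock (D⁻¹ * J₂ F) (-(P * (D⁻¹ * J₂ F) + (P * (D⁻¹ * J₂ F))ᵀ))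
      = affineLine F P D := by
  have hJ : IsUnit (J₂ F).det := by rw [det_J₂]; exact isUnit_one
  have hB : IsUnit (D⁻¹ * J₂ F).det := by
    rw [det_mul]
    exact (isUnit_nonsing_inv_det_iff.mpr hD).mul hJ
  have hP : P ∈ quadricBlock (D⁻¹ * J₂ F) (-(P * (D⁻¹ * J₂ F) + (P * (D⁻¹ * J₂ F))ᵀ)) := by
    simp only [quadricBlock, mem_filter, mem_univ, true_and, transpose_mul]
    abel
  rw [quadricBlock_eq_affineLine h2 hB hP, Matrix.mul_inv_rev, nonsing_inv_nonsing_inv D hD,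
    ← Matrix.mul_assoc, mul_nonsing_inv _ hJ, Matrix.one_mul]

theorem image_quadricBlock_eq_invertibleLines (h2 : (2 : F) ≠ 0) :
    (univ.filter fun BC : Matrix (Fin 2) (Fin 2) F × Matrix (Fin 2) (Fin 2) F =>
        IsUnit BC.1.det ∧ BC.2.IsSymm).image (fun BC => quadricBlock BC.1 BC.2)
      = invertibleLines F (Fin 2) := by
  ext b
  simp only [mem_image, mem_filter, mem_univ, true_and, Prod.exists, mem_invertibleLines]
  constructor
  · rintro ⟨B, C, ⟨hB, hC⟩, rfl⟩
    refine ⟨_, J₂ F * B⁻¹, ?_,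
      (quadricBlock_eq_affineLine h2 hB (neg_half_smul_mul_inv_mem_quadricBlock h2 hB hC)).symm⟩
    rw [det_mul, det_J₂, one_mul]
    exact isUnit_nonsing_inv_det_iff.mpr hB
  · rintro ⟨P, D, hD, rfl⟩
    refine ⟨_, _, ⟨?_, ?_⟩, quadricBlock_inv_mul_J₂ h2 hD P⟩
    · rw [det_mul, det_J₂, mul_one]
      exact isUnit_nonsing_inv_det_iff.mpr hD
    · simp only [IsSymm, transpose_neg, transpose_add, transpose_transpose, add_comm]

end Quadric

section Companion

variable {F : Type} [Field F] [Fintype F] [DecidableEq F]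

lemma card_filter_det_add_smul_one_eq_zero_eq_two :
    #{μ : F | ((!![0, 0; 1, 1] : Matrix (Fin 2) (Fin 2) F) + μ • 1).det = 0} = 2 := by
  have hroots :
      ({μ : F | ((!![0, 0; 1, 1] : Matrix (Fin 2) (Fin 2) F) + μ • 1).det = 0} : Finset F)
        = {0, -1} := by
    ext μ
    simp [det_fin_two, eq_neg_iff_add_eq_zero, add_comm]
  rw [hroots, card_pair (by simp)]

lemma card_filter_det_add_smul_one_eq_zero_eq_one :
    #{μ : F | ((!![0, 0; 1, 0] : Matrix (Fin 2) (Fin 2) F) + μ • 1).det = 0} = 1 := by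
  have hroots :
      ({μ : F | ((!![0, 0; 1, 0] : Matrix (Fin 2) (Fin 2) F) + μ • 1).det = 0} : Finset F)
        = {0} := by
    ext μ
    simp [det_fin_two]
  rw [hroots, card_singleton]

lemma card_filter_det_add_smul_one_eq_zero_eq_zero {c : F} (hc : ¬IsSquare c) :
    #{μ : F | (!![0, c; 1, 0] + μ • 1).det = 0} = 0 := by
  refine card_eq_zero.mpr (filter_eq_empty_iff.mpr fun μ _ h => hc ⟨μ, ?_⟩)
  simp [det_fin_two] at h
  linear_combination -h

end Companion

theorem isGPG_invertibleLines {F : Type} [Field F] [Fintype F] [DecidableEq F]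
    (hF : ringChar F ≠ 2) :
    IsGPG (invertibleLines F (Fin 2)) (Fintype.card F - 1)
      (Fintype.card F * (Fintype.card F ^ 2 - 1) - 1)
      {Fintype.card F - 2, Fintype.card F - 1, Fintype.card F} := by
  set q := Fintype.card F
  have hq : 1 < q := Fintype.one_lt_card
  have hnotScalar : ∀ a d c : F, !![0, a; 1, d] ≠ c • (1 : Matrix (Fin 2) (Fin 2) F) :=
    fun a d c h => by simpa using congrFun₂ h 1 0
  refine ⟨fun P Q => card_filter_mem_mem_invertibleLines_le_one,
    fun b hb => by rw [card_of_mem_invertibleLines hb]; omega, fun P => ?_,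
    fun P b hb _ => ?_, ?_⟩
  · have hdeg := card_filter_mem_invertibleLines_mul (n := Fin 2) P
    have hGL : (q ^ 2 - q ^ (0 : Fin 2).val) * (q ^ 2 - q ^ (1 : Fin 2).val)
        = q * (q ^ 2 - 1) * (q - 1) := by
      have : q ≤ q ^ 2 := Nat.le_self_pow two_ne_zero q
      have : 1 ≤ q ^ 2 := Nat.one_le_pow _ _ (by omega)
      simp only [Fin.val_zero, Fin.val_one, pow_zero, pow_one]
      zify [*, hq.le]
      ring
    rw [card_GL_field, Fin.prod_univ_two, hGL] at hdeg
    have hpos : 0 < q * (q ^ 2 - 1) :=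
      Nat.mul_pos (by omega) (Nat.sub_pos_of_lt (Nat.one_lt_pow two_ne_zero hq))
    rw [Nat.eq_of_mul_eq_mul_right (by omega) hdeg, Nat.sub_add_cancel hpos]
  · have hIcc := card_filter_joinedIn_mem_Icc hb P
    simp only [mem_Icc, Fintype.card_fin] at hIcc
    simp only [mem_insert, mem_singleton]
    omega
  · intro α hα
    simp only [mem_insert, mem_singleton] at hα
    rcases hα with rfl | rfl | rfl
    · obtain ⟨P, b, hb, hPb, h⟩ := exists_antiflag_card_eq (hnotScalar 0 1)
      exact ⟨P, b, hb, hPb, by rw [h, card_filter_det_add_smul_one_eq_zero_eq_two]⟩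
    · obtain ⟨P, b, hb, hPb, h⟩ := exists_antiflag_card_eq (hnotScalar 0 0)
      exact ⟨P, b, hb, hPb, by rw [h, card_filter_det_add_smul_one_eq_zero_eq_one]⟩
    · obtain ⟨c, hc⟩ := FiniteField.exists_nonsquare hF
      obtain ⟨P, b, hb, hPb, h⟩ := exists_antiflag_card_eq (hnotScalar c 0)
      exact ⟨P, b, hb, hPb, by
        rw [h, card_filter_det_add_smul_one_eq_zero_eq_zero hc, Nat.sub_zero]⟩

/-- The incidence structure of lines (N|I₂) skew to (I₂|0) versus hyperbolic quadrics
[[0,B],[Bᵀ,C]] through (I₂|0) — where (N|I₂) lies in the quadric iff BᵀNᵀ+NB+C = 0 —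
is a generalized partial geometry PG(q-1, q(q²-1)-1; q-2, q-1, q). -/
theorem stmt_13 (F : Type) [Field F] [Fintype F] [DecidableEq F] (q : ℕ)
    (hq : Fintype.card F = q) (hodd : Odd q) :
    IsGPG (V := Matrix (Fin 2) (Fin 2) F)
      ((Finset.univ.filter (fun BC : Matrix (Fin 2) (Fin 2) F × Matrix (Fin 2) (Fin 2) F =>
          IsUnit BC.1.det ∧ BC.2.IsSymm)).image
        (fun BC => Finset.univ.filter
          (fun N : Matrix (Fin 2) (Fin 2) F => BC.1ᵀ * Nᵀ + N * BC.1 + BC.2 = 0)))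
      (q - 1) (q * (q ^ 2 - 1) - 1) {q - 2, q - 1, q} := by
  have hF : ringChar F ≠ 2 := fun h => by
    rw [FiniteField.even_card_iff_char_two, hq, ← Nat.even_iff] at h
    exact Nat.not_even_iff_odd.mpr hodd h
  have h := isGPG_invertibleLines hF
  rw [← image_quadricBlock_eq_invertibleLines (Ring.two_ne_zero hF), hq] at h
  exact h
end

section
/- Let q be an odd prime power and M_2 the incidence matrix of the strongly regular generalized partial geometry (L_1, H_1) from hyperbolic quadrics in PG(3,q). Then rank_2(M_2) ≥ q^4 - q^3 - q^2 + q. -/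
/-!
Over every field `R` in which `q ≠ 0` the rows of `M₂` are linearly independent, so its rank is
even `q⁴`. If `N₁` is incident with the quadric `(B, C)`, then `N` is incident with it iff
`(N - N₁) B` is skew-symmetric, i.e. a multiple of `J = [[0,1],[-1,0]]`: the quadric meets
the affine line `N₁ + F • J B⁻¹` of `2 × 2` matrices, and every line with invertible direction
arises this way. A vector `v` in the left kernel therefore sums to zero along all these lines.
For a nonsquare `a`, the nonzero matrices `x + y [[0,a],[1,0]]` are all invertible, so `v` sums
to zero along every line of the affine plane through `N` they span. In that plane, summing `v`
over the lines `N + F • (1, s)` counts `N` exactly `q` times and every point off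
`N + F • (0, 1)` once; those points are also covered by the lines `N + (x, 0) + F • (0, 1)`
with `x ≠ 0`, so `q • v N = 0`.
-/

open Matrix

namespace QuadricIncidence

section Symplectic

variable {R : Type*} [CommRing R]

variable (R) in
def stdSymplectic : Matrix (Fin 2) (Fin 2) R := !![0, 1; -1, 0]

lemma det_stdSymplectic : (stdSymplectic R).det = 1 := by
  simp [stdSymplectic, det_fin_two_of]

lemma transpose_stdSymplectic : (stdSymplectic R)ᵀ = -stdSymplectic R := by
  ext i j
  fin_cases i <;> fin_cases j <;> simp [stdSymplectic]

lemma add_transpose_eq_zero_iff [NoZeroDivisors R] (h2 : (2 : R) ≠ 0)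
    {M : Matrix (Fin 2) (Fin 2) R} : M + Mᵀ = 0 ↔ ∃ t : R, M = t • stdSymplectic R := by
  refine ⟨fun h => ⟨M 0 1, ?_⟩, ?_⟩
  · have h00 := congrFun₂ h 0 0
    have h11 := congrFun₂ h 1 1
    have h10 := congrFun₂ h 1 0
    simp only [Matrix.add_apply, transpose_apply, Matrix.zero_apply, ← two_mul, mul_eq_zero, h2,
      false_or] at h00 h11 h10
    ext i j
    fin_cases i <;> fin_cases j <;> simp [stdSymplectic, h00, h11, eq_neg_of_add_eq_zero_left h10]
  · rintro ⟨t, rfl⟩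
    rw [transpose_smul, transpose_stdSymplectic, smul_neg, add_neg_cancel]

end Symplectic

variable {F : Type*} [Field F]

lemma incident_iff_mem_line (h2 : (2 : F) ≠ 0) {B C N₁ d : Matrix (Fin 2) (Fin 2) F}
    (hB : IsUnit B) (hdB : d * B = stdSymplectic F) (hN₁ : Bᵀ * N₁ᵀ + N₁ * B + C = 0)
    (N : Matrix (Fin 2) (Fin 2) F) :
    Bᵀ * Nᵀ + N * B + C = 0 ↔ ∃ t : F, N = N₁ + t • d := by
  have hshift : Bᵀ * Nᵀ + N * B + C = (N - N₁) * B + ((N - N₁) * B)ᵀ := by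
    rw [← sub_zero (_ + C), ← hN₁, transpose_mul, transpose_sub, sub_mul, mul_sub]
    abel
  rw [hshift, add_transpose_eq_zero_iff h2]
  refine exists_congr fun t => ?_
  rw [← hdB, ← smul_mul, hB.mul_left_inj, sub_eq_iff_eq_add']

lemma exists_incident_iff_mem_line (h2 : (2 : F) ≠ 0) (N₁ : Matrix (Fin 2) (Fin 2) F)
    {d : Matrix (Fin 2) (Fin 2) F} (hd : IsUnit d) :
    ∃ B C : Matrix (Fin 2) (Fin 2) F, IsUnit B.det ∧ C.IsSymm ∧
      ∀ N, Bᵀ * Nᵀ + N * B + C = 0 ↔ ∃ t : F, N = N₁ + t • d := by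
  set B := d⁻¹ * stdSymplectic F
  have hJ : IsUnit (stdSymplectic F) := (isUnit_iff_isUnit_det _).2 (by simp [det_stdSymplectic])
  have hB : IsUnit B := (isUnit_nonsing_inv_iff.2 hd).mul hJ
  have hdB : d * B = stdSymplectic F :=
    mul_nonsing_inv_cancel_left _ _ ((isUnit_iff_isUnit_det d).1 hd)
  refine ⟨B, -(Bᵀ * N₁ᵀ + N₁ * B), (isUnit_iff_isUnit_det B).1 hB, ?_,
    incident_iff_mem_line h2 hB hdB (by abel)⟩
  simp only [IsSymm, transpose_neg, transpose_add, transpose_mul, transpose_transpose, add_comm]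

theorem card_smul_eq_zero_of_forall_sum_line_eq_zero [Fintype F] {K : Type*}
    [AddCommMonoid K] (f : F × F → K) (hf : ∀ p d : F × F, d ≠ 0 → ∑ t : F, f (p + t • d) = 0)
    (p : F × F) :
    Fintype.card F • f p = 0 := by
  have hvert : ∀ x, ∑ y, f (p + (x, y)) = 0 := fun x => by
    have hline := hf (p + (x, 0)) (0, 1) (by simp)
    simpa only [Prod.smul_mk, smul_eq_mul, mul_zero, mul_one, add_assoc, Prod.mk_add_mk,
      add_zero, zero_add] using hline
  have hslope : ∀ x ≠ 0, ∑ s, f (p + (x, x * s)) = 0 := fun x hx =>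
    (Equiv.sum_comp (Equiv.mulLeft₀ x hx) fun y => f (p + (x, y))).trans (hvert x)
  calc Fintype.card F • f p = ∑ x, ∑ s, f (p + (x, x * s)) := by
        rw [Finset.sum_eq_single 0 (fun x _ hx => hslope x hx) (by simp)]
        simp [Prod.mk_zero_zero]
    _ = ∑ s, ∑ t, f (p + t • ((1 : F), s)) := by
        simp only [Prod.smul_mk, smul_eq_mul, mul_one]
        exact Finset.sum_comm
    _ = 0 := Finset.sum_eq_zero fun s _ => hf p (1, s) (by simp)

def nonsquarePlane (a : F) : F × F →ₗ[F] Matrix (Fin 2) (Fin 2) F :=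
  (LinearMap.fst F F F).smulRight 1 + (LinearMap.snd F F F).smulRight !![0, a; 1, 0]

lemma det_nonsquarePlane (a x y : F) : (nonsquarePlane a (x, y)).det = x * x - a * (y * y) := by
  simp [nonsquarePlane, det_fin_two]
  ring

lemma isUnit_nonsquarePlane {a : F} (ha : ¬IsSquare a) {p : F × F} (hp : p ≠ 0) :
    IsUnit (nonsquarePlane a p) := by
  obtain ⟨x, y⟩ := p
  rw [isUnit_iff_isUnit_det, det_nonsquarePlane, isUnit_iff_ne_zero, sub_ne_zero]
  intro hxy
  by_cases hy : y = 0
  · simp_all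
  · exact ha ⟨x / y, by rw [div_mul_div_comm, eq_div_iff (mul_ne_zero hy hy), hxy]⟩

theorem card_smul_eq_zero_of_forall_sum_matrix_line_eq_zero [Fintype F]
    (hF : ringChar F ≠ 2) {K : Type*} [AddCommMonoid K] (v : Matrix (Fin 2) (Fin 2) F → K)
    (hv : ∀ N₁ d, IsUnit d → ∑ t : F, v (N₁ + t • d) = 0) (N : Matrix (Fin 2) (Fin 2) F) :
    Fintype.card F • v N = 0 := by
  obtain ⟨a, ha⟩ := FiniteField.exists_nonsquare hF
  simpa using card_smul_eq_zero_of_forall_sum_line_eq_zero (fun p => v (N + nonsquarePlane a p))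
    (fun p d hd => by
      simpa [add_assoc] using hv (N + nonsquarePlane a p) _ (isUnit_nonsquarePlane ha hd)) 0

variable (F) in
abbrev HyperbolicQuadric :=
  {BC : Matrix (Fin 2) (Fin 2) F × Matrix (Fin 2) (Fin 2) F // IsUnit BC.1.det ∧ BC.2.IsSymm}

variable (F) in
def incidenceMatrix [DecidableEq F] (R : Type*) [Zero R] [One R] :
    Matrix (Matrix (Fin 2) (Fin 2) F) (HyperbolicQuadric F) R :=
  Matrix.of fun N H => if H.1.1ᵀ * Nᵀ + N * H.1.1 + H.1.2 = 0 then 1 else 0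

lemma sum_line_eq_zero_of_vecMul_incidenceMatrix_eq_zero [Fintype F] [DecidableEq F]
    (h2 : (2 : F) ≠ 0) {R : Type*} [CommSemiring R] {v : Matrix (Fin 2) (Fin 2) F → R}
    (hv : v ᵥ* incidenceMatrix F R = 0) (N₁ : Matrix (Fin 2) (Fin 2) F)
    {d : Matrix (Fin 2) (Fin 2) F} (hd : IsUnit d) : ∑ t : F, v (N₁ + t • d) = 0 := by
  obtain ⟨B, C, hB, hC, hline⟩ := exists_incident_iff_mem_line h2 N₁ hd
  have hcol := congrFun hv ⟨(B, C), hB, hC⟩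
  have hinj : Function.Injective fun t : F => N₁ + t • d :=
    (add_right_injective N₁).comp (smul_left_injective F hd.ne_zero)
  simp only [vecMul, dotProduct, incidenceMatrix, of_apply, mul_ite, mul_one, mul_zero,
    ← Finset.sum_filter, Pi.zero_apply] at hcol
  rwa [show Finset.univ.filter (fun N => Bᵀ * Nᵀ + N * B + C = 0) =
      Finset.univ.image fun t : F => N₁ + t • d by ext N; simp [hline, eq_comm],
    Finset.sum_image fun t _ t' _ h => hinj h] at hcol

theorem rank_incidenceMatrix [Fintype F] [DecidableEq F] (hF : ringChar F ≠ 2)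
    {R : Type*} [Field R] (hR : (Fintype.card F : R) ≠ 0) :
    (incidenceMatrix F R).rank = Fintype.card F ^ 4 := by
  have hker : ∀ v, v ᵥ* incidenceMatrix F R = 0 → v = 0 := fun v hv => funext fun N => by
    have hqv := card_smul_eq_zero_of_forall_sum_matrix_line_eq_zero hF v
      (sum_line_eq_zero_of_vecMul_incidenceMatrix_eq_zero (Ring.two_ne_zero hF) hv) N
    rw [nsmul_eq_mul] at hqv
    exact (mul_eq_zero.1 hqv).resolve_left hR
  have hrows : LinearIndependent R (incidenceMatrix F R).row :=
    vecMul_injective_iff.1 <| (injective_iff_map_eq_zero (incidenceMatrix F R).vecMulLinear).2 hker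
  rw [hrows.rank_matrix, Fintype.card_congr Matrix.of.symm, Fintype.card_fun, Fintype.card_fun,
    Fintype.card_fin, ← pow_mul]

end QuadricIncidence

open QuadricIncidence

/-- The 2-rank of the incidence matrix M₂ of the strongly regular generalized partial
geometry (ℒ₁,ℋ₁) from hyperbolic quadrics in PG(3,q) — rows the lines (N|I₂) skew to
(I₂|0), columns the hyperbolic quadrics [[0,B],[Bᵀ,C]] through (I₂|0), with incidence
BᵀNᵀ+NB+C = 0 — is at least q⁴ - q³ - q² + q. -/
theorem stmt_18 (F : Type) [Field F] [Fintype F] [DecidableEq F] (q : ℕ)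
    (hq : Fintype.card F = q) (hodd : Odd q) :
    q ^ 4 - q ^ 3 - q ^ 2 + q ≤
      (Matrix.of (fun (N : Matrix (Fin 2) (Fin 2) F)
          (H : {BC : Matrix (Fin 2) (Fin 2) F × Matrix (Fin 2) (Fin 2) F //
            IsUnit BC.1.det ∧ BC.2.IsSymm}) =>
        if H.1.1ᵀ * Nᵀ + N * H.1.1 + H.1.2 = 0 then (1 : ZMod 2) else 0)).rank := by
  subst hq
  have hF : ringChar F ≠ 2 := fun h => by
    simpa [Nat.odd_iff.1 hodd] using FiniteField.even_card_of_char_two h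
  have hR : (Fintype.card F : ZMod 2) ≠ 0 := by
    rw [hodd.natCast_zmod_two]
    exact one_ne_zero
  calc _ ≤ Fintype.card F ^ 4 := by
        have hsq : Fintype.card F ≤ Fintype.card F ^ 2 := Nat.le_self_pow two_ne_zero _
        have hpow : Fintype.card F ≤ Fintype.card F ^ 4 := Nat.le_self_pow four_ne_zero _
        omega
    _ = _ := (rank_incidenceMatrix hF hR).symm
end

section
/- In the Tanner graph of the LDPC code defined by the incidence matrix of an SRPG(s,t;α_1,...,α_r;λ,μ) with some α_i ≥ 2, the number of 6-cycles is exactly n·s·(s+1)·(λ-s+1)/6, where n is the number of blocks. -/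
open Matrix

/-- The Tanner graph of the LDPC code of an SRPG(s,t;α₁,…,α_r;λ,μ): the bipartite
incidence graph of points and blocks. -/
def tannerGraph {V : Type} [DecidableEq V] (Bl : Finset (Finset V)) :
    SimpleGraph (V ⊕ {b : Finset V // b ∈ Bl}) :=
  SimpleGraph.fromRel (fun x y => ∃ (P : V) (b : {b : Finset V // b ∈ Bl}),
    x = Sum.inl P ∧ y = Sum.inr b ∧ P ∈ b.1)

set_option linter.unusedSectionVars false

open Finset

section Aux
variable {V : Type} [DecidableEq V] {Bl : Finset (Finset V)}

lemma tanner_adj_lr {P : V} {b : {b : Finset V // b ∈ Bl}} (h : P ∈ b.1) :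
    (tannerGraph Bl).Adj (Sum.inl P) (Sum.inr b) := by
  simpa [tannerGraph, SimpleGraph.fromRel_adj] using h

lemma tanner_adj_rl {P : V} {b : {b : Finset V // b ∈ Bl}} (h : P ∈ b.1) :
    (tannerGraph Bl).Adj (Sum.inr b) (Sum.inl P) := (tanner_adj_lr h).symm

lemma tanner_mem_of_adj {P : V} {b : {b : Finset V // b ∈ Bl}}
    (h : (tannerGraph Bl).Adj (Sum.inl P) (Sum.inr b)) : P ∈ b.1 := by
  simpa [tannerGraph, SimpleGraph.fromRel_adj] using h

lemma tanner_not_adj_ll {P Q : V} : ¬ (tannerGraph Bl).Adj (Sum.inl P) (Sum.inl Q) := by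
  simp [tannerGraph, SimpleGraph.fromRel_adj]

lemma tanner_not_adj_rr {a b : {b : Finset V // b ∈ Bl}} :
    ¬ (tannerGraph Bl).Adj (Sum.inr a) (Sum.inr b) := by
  simp [tannerGraph, SimpleGraph.fromRel_adj]

end Aux

section Hex
variable {W : Type} {G : SimpleGraph W} {v0 v1 v2 v3 v4 v5 : W}

def hexWalk (h01 : G.Adj v0 v1) (h12 : G.Adj v1 v2) (h23 : G.Adj v2 v3)
    (h34 : G.Adj v3 v4) (h45 : G.Adj v4 v5) (h50 : G.Adj v5 v0) : G.Walk v0 v0 :=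
  .cons h01 (.cons h12 (.cons h23 (.cons h34 (.cons h45 (.cons h50 .nil)))))

lemma hexWalk_isCycle (h01 : G.Adj v0 v1) (h12 : G.Adj v1 v2) (h23 : G.Adj v2 v3)
    (h34 : G.Adj v3 v4) (h45 : G.Adj v4 v5) (h50 : G.Adj v5 v0)
    (hnd : ([v0, v1, v2, v3, v4, v5] : List W).Nodup) :
    (hexWalk h01 h12 h23 h34 h45 h50).IsCycle := by
  simp only [List.nodup_cons, List.mem_cons, List.mem_singleton, List.not_mem_nil,
    List.nodup_nil, or_false, not_or, and_true] at hnd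
  obtain ⟨⟨h1, h2, h3, h4, h5⟩, ⟨g2, g3, g4, g5⟩, ⟨k3, k4, k5⟩, ⟨l4, l5⟩, m5⟩ := hnd
  rw [hexWalk, SimpleGraph.Walk.cons_isCycle_iff]
  constructor
  · apply SimpleGraph.Walk.IsPath.mk'
    simp [SimpleGraph.Walk.support]
    tauto
  · simp [SimpleGraph.Walk.edges, Sym2.eq_iff]
    tauto

end Hex

section T
variable {V : Type} [Fintype V] [DecidableEq V] (Bl : Finset (Finset V))

def hexTuples : Finset (({b : Finset V // b ∈ Bl} × {b : Finset V // b ∈ Bl} ×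
    {b : Finset V // b ∈ Bl}) × V × V × V) :=
  univ.filter fun x =>
    x.2.1 ∈ x.1.1.1 ∧ x.2.2.1 ∈ x.1.1.1 ∧ x.2.2.1 ∈ x.1.2.1.1 ∧ x.2.2.2 ∈ x.1.2.1.1 ∧
    x.2.2.2 ∈ x.1.2.2.1 ∧ x.2.1 ∈ x.1.2.2.1 ∧
    x.2.1 ≠ x.2.2.1 ∧ x.2.1 ≠ x.2.2.2 ∧ x.2.2.1 ≠ x.2.2.2 ∧
    x.1.1 ≠ x.1.2.1 ∧ x.1.1 ≠ x.1.2.2 ∧ x.1.2.1 ≠ x.1.2.2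

variable {Bl}

lemma mem_hexTuples {b1 b2 b3 : {b : Finset V // b ∈ Bl}} {p1 p2 p3 : V} :
    ((b1, b2, b3), (p1, p2, p3)) ∈ hexTuples Bl ↔
      p1 ∈ b1.1 ∧ p2 ∈ b1.1 ∧ p2 ∈ b2.1 ∧ p3 ∈ b2.1 ∧ p3 ∈ b3.1 ∧ p1 ∈ b3.1 ∧
      p1 ≠ p2 ∧ p1 ≠ p3 ∧ p2 ≠ p3 ∧ b1 ≠ b2 ∧ b1 ≠ b3 ∧ b2 ≠ b3 := by
  simp [hexTuples]

lemma nodup6_l {p1 p2 p3 : V} {b1 b2 b3 : {b : Finset V // b ∈ Bl}}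
    (hp12 : p1 ≠ p2) (hp13 : p1 ≠ p3) (hp23 : p2 ≠ p3)
    (hb12 : b1 ≠ b2) (hb13 : b1 ≠ b3) (hb23 : b2 ≠ b3) :
    ([Sum.inl p1, Sum.inr b1, Sum.inl p2, Sum.inr b2, Sum.inl p3, Sum.inr b3] :
      List (V ⊕ {b : Finset V // b ∈ Bl})).Nodup := by
  simp [List.nodup_cons]; tauto

lemma nodup6_r {p1 p2 p3 : V} {b1 b2 b3 : {b : Finset V // b ∈ Bl}}
    (hp12 : p1 ≠ p2) (hp13 : p1 ≠ p3) (hp23 : p2 ≠ p3)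
    (hb12 : b1 ≠ b2) (hb13 : b1 ≠ b3) (hb23 : b2 ≠ b3) :
    ([Sum.inr b1, Sum.inl p2, Sum.inr b2, Sum.inl p3, Sum.inr b3, Sum.inl p1] :
      List (V ⊕ {b : Finset V // b ∈ Bl})).Nodup := by
  simp [List.nodup_cons]; tauto

abbrev HexCycles (Bl : Finset (Finset V)) :=
  {c : Σ x : V ⊕ {b : Finset V // b ∈ Bl}, (tannerGraph Bl).Walk x x //
      c.2.IsCycle ∧ c.2.length = 6}

def mkCycle {x0 x1 x2 x3 x4 x5 : V ⊕ {b : Finset V // b ∈ Bl}}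
    (h01 : (tannerGraph Bl).Adj x0 x1) (h12 : (tannerGraph Bl).Adj x1 x2)
    (h23 : (tannerGraph Bl).Adj x2 x3) (h34 : (tannerGraph Bl).Adj x3 x4)
    (h45 : (tannerGraph Bl).Adj x4 x5) (h50 : (tannerGraph Bl).Adj x5 x0)
    (hnd : ([x0, x1, x2, x3, x4, x5] : List (V ⊕ {b : Finset V // b ∈ Bl})).Nodup) :
    HexCycles Bl :=
  ⟨⟨x0, hexWalk h01 h12 h23 h34 h45 h50⟩,
    hexWalk_isCycle h01 h12 h23 h34 h45 h50 hnd, rfl⟩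

def tupToCyc : Bool × {y // y ∈ hexTuples Bl} → HexCycles Bl
  | (false, ⟨((b1, b2, b3), (p1, p2, p3)), hy⟩) =>
    have h := mem_hexTuples.mp hy
    mkCycle (tanner_adj_lr h.1) (tanner_adj_rl h.2.1) (tanner_adj_lr h.2.2.1)
      (tanner_adj_rl h.2.2.2.1) (tanner_adj_lr h.2.2.2.2.1) (tanner_adj_rl h.2.2.2.2.2.1)
      (nodup6_l h.2.2.2.2.2.2.1 h.2.2.2.2.2.2.2.1 h.2.2.2.2.2.2.2.2.1
        h.2.2.2.2.2.2.2.2.2.1 h.2.2.2.2.2.2.2.2.2.2.1 h.2.2.2.2.2.2.2.2.2.2.2)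
  | (true, ⟨((b1, b2, b3), (p1, p2, p3)), hy⟩) =>
    have h := mem_hexTuples.mp hy
    mkCycle (tanner_adj_rl h.2.1) (tanner_adj_lr h.2.2.1) (tanner_adj_rl h.2.2.2.1)
      (tanner_adj_lr h.2.2.2.2.1) (tanner_adj_rl h.2.2.2.2.2.1) (tanner_adj_lr h.1)
      (nodup6_r h.2.2.2.2.2.2.1 h.2.2.2.2.2.2.2.1 h.2.2.2.2.2.2.2.2.1
        h.2.2.2.2.2.2.2.2.2.1 h.2.2.2.2.2.2.2.2.2.2.1 h.2.2.2.2.2.2.2.2.2.2.2)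

end T

section Bij
variable {V : Type} [Fintype V] [DecidableEq V] {Bl : Finset (Finset V)}

lemma tupToCyc_injective : Function.Injective (tupToCyc (Bl := Bl)) := by
  rintro ⟨r, ⟨⟨⟨b1, b2, b3⟩, p1, p2, p3⟩, hx⟩⟩ ⟨r', ⟨⟨⟨c1, c2, c3⟩, q1, q2, q3⟩, hy⟩⟩ h
  have hs := congrArg (fun c : HexCycles Bl => c.1.2.support) h
  cases r <;> cases r' <;>
    simp only [tupToCyc, mkCycle, hexWalk, SimpleGraph.Walk.support_cons,
      SimpleGraph.Walk.support_nil, List.cons.injEq, Sum.inl.injEq, Sum.inr.injEq,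
      and_true, reduceCtorEq, and_false, false_and] at hs
  · obtain ⟨e1, e2, e3, e4, e5, e6, -⟩ := hs
    subst e1; subst e2; subst e3; subst e4; subst e5; subst e6; rfl
  · obtain ⟨e1, e2, e3, e4, e5, e6, -⟩ := hs
    subst e1; subst e2; subst e3; subst e4; subst e5; subst e6; rfl

lemma tupToCyc_surjective : Function.Surjective (tupToCyc (Bl := Bl)) := by
  rintro ⟨⟨x, w⟩, hc, hl⟩
  cases w with
  | nil => simp at hl
  | @cons _ x1 _ h01 w =>
  cases w with
  | nil => simp at hl
  | @cons _ x2 _ h12 w =>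
  cases w with
  | nil => simp at hl
  | @cons _ x3 _ h23 w =>
  cases w with
  | nil => simp at hl
  | @cons _ x4 _ h34 w =>
  cases w with
  | nil => simp at hl
  | @cons _ x5 _ h45 w =>
  cases w with
  | nil => simp at hl
  | @cons _ x6 _ h56 w =>
  cases w with
  | nil =>
    rw [SimpleGraph.Walk.isCycle_def] at hc
    obtain ⟨-, -, hnd⟩ := hc
    cases x with
    | inl p1 =>
      cases x1 with
      | inl q => exact absurd h01 tanner_not_adj_ll
      | inr B1 =>
      cases x2 with
      | inr B => exact absurd h12 tanner_not_adj_rr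
      | inl p2 =>
      cases x3 with
      | inl q => exact absurd h23 tanner_not_adj_ll
      | inr B2 =>
      cases x4 with
      | inr B => exact absurd h34 tanner_not_adj_rr
      | inl p3 =>
      cases x5 with
      | inl q => exact absurd h45 tanner_not_adj_ll
      | inr B3 =>
      simp only [SimpleGraph.Walk.support_cons, SimpleGraph.Walk.support_nil,
        List.tail_cons, List.nodup_cons, List.mem_cons, List.mem_singleton,
        List.not_mem_nil, or_false, not_or, List.nodup_nil, and_true,
        Sum.inl.injEq, Sum.inr.injEq, reduceCtorEq, not_false_eq_true, true_and] at hnd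
      refine ⟨(false, ⟨((B1, B2, B3), (p1, p2, p3)), mem_hexTuples.mpr
        ⟨tanner_mem_of_adj h01, tanner_mem_of_adj h12.symm, tanner_mem_of_adj h23,
         tanner_mem_of_adj h34.symm, tanner_mem_of_adj h45, tanner_mem_of_adj h56.symm,
         ?_, ?_, ?_, ?_, ?_, ?_⟩⟩), rfl⟩ <;> tauto
    | inr B1 =>
      cases x1 with
      | inr B => exact absurd h01 tanner_not_adj_rr
      | inl p2 =>
      cases x2 with
      | inl q => exact absurd h12 tanner_not_adj_ll
      | inr B2 =>
      cases x3 with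
      | inr B => exact absurd h23 tanner_not_adj_rr
      | inl p3 =>
      cases x4 with
      | inl q => exact absurd h34 tanner_not_adj_ll
      | inr B3 =>
      cases x5 with
      | inr B => exact absurd h45 tanner_not_adj_rr
      | inl p1 =>
      simp only [SimpleGraph.Walk.support_cons, SimpleGraph.Walk.support_nil,
        List.tail_cons, List.nodup_cons, List.mem_cons, List.mem_singleton,
        List.not_mem_nil, or_false, not_or, List.nodup_nil, and_true,
        Sum.inl.injEq, Sum.inr.injEq, reduceCtorEq, not_false_eq_true, true_and] at hnd
      refine ⟨(true, ⟨((B1, B2, B3), (p1, p2, p3)), mem_hexTuples.mpr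
        ⟨tanner_mem_of_adj h56, tanner_mem_of_adj h01.symm, tanner_mem_of_adj h12,
         tanner_mem_of_adj h23.symm, tanner_mem_of_adj h34, tanner_mem_of_adj h45.symm,
         ?_, ?_, ?_, ?_, ?_, ?_⟩⟩), rfl⟩ <;> tauto
  | cons h p => simp at hl

lemma card_biUnion_sing {α β : Type} [DecidableEq α] [DecidableEq β]
    (s : Finset α) (g : α → Finset β) :
    (s.biUnion fun a => {a} ×ˢ g a).card = ∑ a ∈ s, (g a).card := by
  rw [Finset.card_biUnion]
  · exact Finset.sum_congr rfl fun a _ => by simp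
  · intro a _ b _ hab
    simp only [Finset.disjoint_left, Finset.mem_product, Finset.mem_singleton]
    rintro ⟨u, v⟩ ⟨rfl, -⟩ ⟨rfl, -⟩
    exact hab rfl

lemma unique_block
    (hlin : ∀ P Q : V, P ≠ Q → (Bl.filter fun b => P ∈ b ∧ Q ∈ b).card ≤ 1)
    {p q : V} (hpq : p ≠ q) {b b' : Finset V} (hb : b ∈ Bl) (hb' : b' ∈ Bl)
    (hp : p ∈ b) (hq : q ∈ b) (hp' : p ∈ b') (hq' : q ∈ b') : b = b' := by
  by_contra hne
  have h2 : 1 < (Bl.filter fun c => p ∈ c ∧ q ∈ c).card :=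
    Finset.one_lt_card.mpr ⟨b, by simp [hb, hp, hq], b', by simp [hb', hp', hq'], hne⟩
  exact absurd (hlin p q hpq) (by omega)

end Bij


section Count
variable {V : Type} [Fintype V] [DecidableEq V] {Bl : Finset (Finset V)}
  {s t lam mu : ℕ} {αs : Finset ℕ} {G : SimpleGraph V}

lemma mem_biUnion_sing {α β : Type} [DecidableEq α] [DecidableEq β]
    {s : Finset α} {g : α → Finset β} {x : α × β} :
    x ∈ s.biUnion (fun a => {a} ×ˢ g a) ↔ x.1 ∈ s ∧ x.2 ∈ g x.1 := by
  simp only [Finset.mem_biUnion, Finset.mem_product, Finset.mem_singleton]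
  constructor
  · rintro ⟨a, ha, h1, h2⟩
    exact ⟨h1 ▸ ha, h1 ▸ h2⟩
  · rintro ⟨h1, h2⟩
    exact ⟨x.1, h1, rfl, h2⟩

variable (G) in
def cnt3 [DecidableRel G.Adj] (b : Finset V) (p1 p2 : V) : Finset V :=
  Finset.univ.filter fun q => q ∉ b ∧ G.Adj p1 q ∧ G.Adj p2 q

variable (G) in
def innerQ2 [DecidableRel G.Adj] (b : Finset V) (p1 : V) : Finset (V × V) :=
  (b.erase p1).biUnion fun p2 => {p2} ×ˢ cnt3 G b p1 p2

variable (G) in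
def innerQ1 [DecidableRel G.Adj] (b : Finset V) : Finset (V × V × V) :=
  b.biUnion fun p1 => {p1} ×ˢ innerQ2 G b p1

variable (G Bl) in
def quadQ [DecidableRel G.Adj] : Finset (Finset V × (V × V × V)) :=
  Bl.biUnion fun b => {b} ×ˢ innerQ1 G b

lemma mem_quadQ [DecidableRel G.Adj] {b : Finset V} {p1 p2 p3 : V} :
    (b, (p1, p2, p3)) ∈ quadQ Bl G ↔
      b ∈ Bl ∧ p1 ∈ b ∧ (p2 ∈ b.erase p1) ∧ (p3 ∈ cnt3 G b p1 p2) := by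
  rw [quadQ, mem_biUnion_sing, innerQ1, mem_biUnion_sing, innerQ2, mem_biUnion_sing]

lemma count3_card [DecidableRel G.Adj]
    (hgpg : IsGPG Bl s t αs)
    (hadj : ∀ P Q : V, G.Adj P Q ↔ joinedIn Bl P Q)
    (hsrg : G.IsSRGWith (Fintype.card V) (s * (t + 1)) lam mu)
    (hs : 1 ≤ s) {b : Finset V} (hb : b ∈ Bl) {p1 p2 : V}
    (hp1 : p1 ∈ b) (hp2 : p2 ∈ b) (hne : p1 ≠ p2) :
    (cnt3 G b p1 p2).card = lam + 1 - s := by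
  have hadj12 : G.Adj p1 p2 := (hadj p1 p2).mpr ⟨hne, b, hb, hp1, hp2⟩
  have hlam : (Finset.univ.filter fun q => G.Adj p1 q ∧ G.Adj p2 q).card = lam := by
    have h1 := hsrg.of_adj p1 p2 hadj12
    calc (Finset.univ.filter fun q => G.Adj p1 q ∧ G.Adj p2 q).card
        = Fintype.card {q // G.Adj p1 q ∧ G.Adj p2 q} := (Fintype.card_subtype _).symm
      _ = Fintype.card (G.commonNeighbors p1 p2) :=
          Fintype.card_congr (Equiv.subtypeEquivRight fun q => by
            simp [SimpleGraph.mem_commonNeighbors])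
      _ = lam := h1
  have hsplit := Finset.card_filter_add_card_filter_not
    (s := Finset.univ.filter fun q => G.Adj p1 q ∧ G.Adj p2 q) (p := fun q => q ∈ b)
  have hin : ((Finset.univ.filter fun q => G.Adj p1 q ∧ G.Adj p2 q).filter fun q => q ∈ b)
      = (b.erase p1).erase p2 := by
    ext q
    simp only [Finset.mem_filter, Finset.mem_univ, true_and, Finset.mem_erase]
    constructor
    · rintro ⟨⟨a1, a2⟩, hqb⟩
      exact ⟨(G.ne_of_adj a2).symm, (G.ne_of_adj a1).symm, hqb⟩
    · rintro ⟨hq2, hq1, hqb⟩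
      exact ⟨⟨(hadj p1 q).mpr ⟨Ne.symm hq1, b, hb, hp1, hqb⟩,
        (hadj p2 q).mpr ⟨Ne.symm hq2, b, hb, hp2, hqb⟩⟩, hqb⟩
  have hbcard : b.card = s + 1 := hgpg.2.1 b hb
  have hincard : ((b.erase p1).erase p2).card = s - 1 := by
    rw [Finset.card_erase_of_mem (Finset.mem_erase.mpr ⟨Ne.symm hne, hp2⟩),
      Finset.card_erase_of_mem hp1, hbcard]
    omega
  have hout : ((Finset.univ.filter fun q => G.Adj p1 q ∧ G.Adj p2 q).filter fun q => q ∉ b)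
      = cnt3 G b p1 p2 := by
    rw [cnt3, Finset.filter_filter]
    apply Finset.filter_congr
    intro q _
    tauto
  rw [hin, hincard, hout, hlam] at hsplit
  omega

lemma quadQ_card [DecidableRel G.Adj]
    (hgpg : IsGPG Bl s t αs)
    (hadj : ∀ P Q : V, G.Adj P Q ↔ joinedIn Bl P Q)
    (hsrg : G.IsSRGWith (Fintype.card V) (s * (t + 1)) lam mu)
    (hs : 1 ≤ s) :
    (quadQ Bl G).card = Bl.card * ((s + 1) * (s * (lam + 1 - s))) := by
  have h1 : ∀ b ∈ Bl, ∀ p1 ∈ b, (innerQ2 G b p1).card = s * (lam + 1 - s) := by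
    intro b hb p1 hp1
    rw [innerQ2, card_biUnion_sing]
    calc ∑ p2 ∈ b.erase p1, (cnt3 G b p1 p2).card
        = ∑ _p2 ∈ b.erase p1, (lam + 1 - s) :=
          Finset.sum_congr rfl (fun p2 hp2 =>
            count3_card hgpg hadj hsrg hs hb hp1 (Finset.mem_erase.mp hp2).2
              (Ne.symm (Finset.mem_erase.mp hp2).1))
      _ = s * (lam + 1 - s) := by
          rw [Finset.sum_const, smul_eq_mul, Finset.card_erase_of_mem hp1,
            hgpg.2.1 b hb, Nat.add_sub_cancel]
  have h2 : ∀ b ∈ Bl, (innerQ1 G b).card = (s + 1) * (s * (lam + 1 - s)) := by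
    intro b hb
    rw [innerQ1, card_biUnion_sing]
    calc ∑ p1 ∈ b, (innerQ2 G b p1).card
        = ∑ _p1 ∈ b, s * (lam + 1 - s) := Finset.sum_congr rfl (h1 b hb)
      _ = (s + 1) * (s * (lam + 1 - s)) := by
          rw [Finset.sum_const, smul_eq_mul, hgpg.2.1 b hb]
  rw [quadQ, card_biUnion_sing]
  calc ∑ b ∈ Bl, (innerQ1 G b).card
      = ∑ _b ∈ Bl, (s + 1) * (s * (lam + 1 - s)) := Finset.sum_congr rfl h2
    _ = Bl.card * ((s + 1) * (s * (lam + 1 - s))) := by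
        rw [Finset.sum_const, smul_eq_mul]

lemma hexTuples_card [DecidableRel G.Adj]
    (hgpg : IsGPG Bl s t αs) (hα : ∃ α ∈ αs, 2 ≤ α)
    (hadj : ∀ P Q : V, G.Adj P Q ↔ joinedIn Bl P Q)
    (hsrg : G.IsSRGWith (Fintype.card V) (s * (t + 1)) lam mu) :
    (hexTuples Bl).card = Bl.card * ((s + 1) * (s * (lam + 1 - s))) := by
  have hlin := hgpg.1
  have hs : 1 ≤ s := by
    obtain ⟨α, hαs, hα2⟩ := hα
    obtain ⟨P, b, hbBl, hPb, hfil⟩ := hgpg.2.2.2.2 α hαs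
    have h1 : (b.filter fun Q => joinedIn Bl P Q).card ≤ b.card := Finset.card_filter_le _ _
    have h2 : b.card = s + 1 := hgpg.2.1 b hbBl
    omega
  rw [← quadQ_card hgpg hadj hsrg hs]
  apply Finset.card_bij (fun x _ => (x.1.1.1, x.2))
  · rintro ⟨⟨b1, b2, b3⟩, p1, p2, p3⟩ hx
    obtain ⟨m1, m2, m3, m4, m5, m6, n1, n2, n3, n4, n5, n6⟩ := mem_hexTuples.mp hx
    have hp3nb1 : p3 ∉ b1.1 := by
      intro hmem
      exact n4 (Subtype.ext (unique_block hlin n3 b1.2 b2.2 m2 hmem m3 m4))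
    refine mem_quadQ.mpr ⟨b1.2, m1, Finset.mem_erase.mpr ⟨Ne.symm n1, m2⟩, ?_⟩
    rw [cnt3]
    simp only [Finset.mem_filter, Finset.mem_univ, true_and]
    exact ⟨hp3nb1, (hadj p1 p3).mpr ⟨n2, b3.1, b3.2, m6, m5⟩,
      (hadj p2 p3).mpr ⟨n3, b2.1, b2.2, m3, m4⟩⟩
  · rintro ⟨⟨b1, b2, b3⟩, p1, p2, p3⟩ hx ⟨⟨c1, c2, c3⟩, q1, q2, q3⟩ hy heq
    obtain ⟨m1, m2, m3, m4, m5, m6, n1, n2, n3, n4, n5, n6⟩ := mem_hexTuples.mp hx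
    obtain ⟨m1', m2', m3', m4', m5', m6', n1', n2', n3', n4', n5', n6'⟩ := mem_hexTuples.mp hy
    simp only [Prod.mk.injEq] at heq
    obtain ⟨hb, hp1, hp2, hp3⟩ := heq
    subst hp1; subst hp2; subst hp3
    have hb1 : b1 = c1 := Subtype.ext hb
    subst hb1
    have hb2 : b2 = c2 := Subtype.ext (unique_block hlin n3 b2.2 c2.2 m3 m4 m3' m4')
    have hb3 : b3 = c3 := Subtype.ext (unique_block hlin n2 b3.2 c3.2 m6 m5 m6' m5')
    subst hb2; subst hb3; rfl
  · rintro ⟨b, p1, p2, p3⟩ hx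
    obtain ⟨hb, hp1, hp2e, hp3c⟩ := mem_quadQ.mp hx
    obtain ⟨hp21, hp2⟩ := Finset.mem_erase.mp hp2e
    rw [cnt3] at hp3c
    simp only [Finset.mem_filter, Finset.mem_univ, true_and] at hp3c
    obtain ⟨hp3nb, ha13, ha23⟩ := hp3c
    obtain ⟨hne13, b3, hb3, hp1b3, hp3b3⟩ := (hadj p1 p3).mp ha13
    obtain ⟨hne23, b2, hb2, hp2b2, hp3b2⟩ := (hadj p2 p3).mp ha23
    have hbb2 : b ≠ b2 := fun h => hp3nb (h ▸ hp3b2)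
    have hbb3 : b ≠ b3 := fun h => hp3nb (h ▸ hp3b3)
    have hb23 : b2 ≠ b3 := by
      intro h
      subst h
      exact hbb2 (unique_block hlin (Ne.symm hp21) hb hb2 hp1 hp2 hp1b3 hp2b2)
    exact ⟨((⟨b, hb⟩, ⟨b2, hb2⟩, ⟨b3, hb3⟩), (p1, p2, p3)), mem_hexTuples.mpr
      ⟨hp1, hp2, hp2b2, hp3b2, hp3b3, hp1b3, Ne.symm hp21, hne13, hne23,
        fun h => hbb2 (congrArg Subtype.val h), fun h => hbb3 (congrArg Subtype.val h),
        fun h => hb23 (congrArg Subtype.val h)⟩, rfl⟩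

end Count

/-- In the Tanner graph of an SRPG(s,t;α₁,…,α_r;λ,μ) with some αᵢ ≥ 2, the number of
6-cycles is n·s·(s+1)·(λ-s+1)/6; equivalently, the number of rooted directed closed
walks of length 6 that are cycles (each 6-cycle counted 12 times) is
2·n·s·(s+1)·(λ-s+1). -/
theorem stmt_19 {V : Type} [Fintype V] [DecidableEq V] (Bl : Finset (Finset V))
    (s t lam mu : ℕ) (αs : Finset ℕ)
    (hgpg : IsGPG Bl s t αs) (hα : ∃ α ∈ αs, 2 ≤ α)
    (G : SimpleGraph V) (hdec : DecidableRel G.Adj)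
    (hadj : ∀ P Q : V, G.Adj P Q ↔ joinedIn Bl P Q)
    (hsrg : G.IsSRGWith (Fintype.card V) (s * (t + 1)) lam mu) :
    Nat.card {c : Σ x : V ⊕ {b : Finset V // b ∈ Bl}, (tannerGraph Bl).Walk x x //
        c.2.IsCycle ∧ c.2.length = 6}
      = 2 * Bl.card * s * (s + 1) * (lam + 1 - s) := by
  have hbij : Function.Bijective (tupToCyc (Bl := Bl)) :=
    ⟨tupToCyc_injective, tupToCyc_surjective⟩
  rw [← Nat.card_eq_of_bijective _ hbij, Nat.card_prod,
    Nat.card_eq_fintype_card (α := Bool), Fintype.card_bool, Nat.card_eq_finsetCard,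
    @hexTuples_card V _ _ Bl s t lam mu αs G hdec hgpg hα hadj hsrg]
  ring
end
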